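/- arXiv:2509.12558 — 5 statements merged into one kernel-verified Lean document; each statement's English description precedes it below -/
import Mathlib

section
/- Let X₁, …, Xₙ be integrable random variables. If every random vector (X̃₁, …, X̃ₙ) with the same marginals as (X₁, …, Xₙ) satisfies ∑ᵢ X̃ᵢ ≤_cx ∑ᵢ Xᵢ, then (X₁, …, Xₙ) is comonotonic. -/
set_option maxHeartbeats 1000000

open MeasureTheory ProbabilityTheory
open scoped NNReal

/-- Value at risk: left-continuous generalized inverse of the distribution function. -/
noncomputable def VaR {Ω : Type*} [MeasurableSpace Ω] (P : Measure Ω) (X : Ω → ℝ) (α : ℝ) : ℝ :=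
  sInf {x : ℝ | α ≤ (P {ω | X ω ≤ x}).toReal}

/-- A set `A ⊆ ℝⁿ` is comonotonic. -/
def ComonotonicSet {n : ℕ} (A : Set (Fin n → ℝ)) : Prop :=
  ∀ x ∈ A, ∀ y ∈ A, (∃ i, x i < y i) → ∀ j, x j ≤ y j

/-- Topological support of a measure. -/
def measSupport {E : Type*} [TopologicalSpace E] [MeasurableSpace E] (μ : Measure E) : Set E :=
  {x | ∀ U : Set E, IsOpen U → x ∈ U → 0 < μ U}

/-- A random vector is comonotonic iff the support of its distribution is comonotonic. -/
def Comonotonic {Ω : Type*} [MeasurableSpace Ω] (P : Measure Ω) {n : ℕ}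
    (X : Fin n → Ω → ℝ) : Prop :=
  ComonotonicSet (measSupport (P.map (fun ω i => X i ω)))

/-- An atomless probability space. -/
def Atomless {Ω : Type*} [MeasurableSpace Ω] (P : Measure Ω) : Prop :=
  ∀ A : Set Ω, MeasurableSet A → 0 < P A →
    ∃ B, MeasurableSet B ∧ B ⊆ A ∧ 0 < P B ∧ P B < P A

/-- `U` is uniformly distributed on `(0,1)`. -/
def UniformOn01 {Ω : Type*} [MeasurableSpace Ω] (P : Measure Ω) (U : Ω → ℝ) : Prop :=
  P.map U = volume.restrict (Set.Ioo (0 : ℝ) 1)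

/-- Two-point "spread increases stop-loss" inequality. -/
lemma max_gain (c r d su sv : ℝ) (hd : 0 ≤ d) (hsv : c ≤ sv) (hsu : su - c ≤ r) (hr : 0 ≤ r) :
    d - r ≤ max (su - d - c) 0 + max (sv + d - c) 0 - max (su - c) 0 - max (sv - c) 0 := by
  have h1 : max (su - c) 0 ≤ r := max_le (by linarith) hr
  have h2 : max (sv + d - c) 0 = sv + d - c := max_eq_left (by linarith)
  have h3 : max (sv - c) 0 = sv - c := max_eq_left (by linarith)
  have h4 : (0:ℝ) ≤ max (su - d - c) 0 := le_max_right _ _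
  linarith

theorem convex_order_max_implies_comonotonic {Ω : Type*} [MeasurableSpace Ω]
    (P : Measure Ω) [IsProbabilityMeasure P]
    {n : ℕ} (X : Fin n → Ω → ℝ)
    (hX : ∀ i, Measurable (X i)) (hint : ∀ i, Integrable (X i) P)
    (hcx : ∀ (Ω' : Type) (_ : MeasurableSpace Ω') (Q : Measure Ω')
        (_ : IsProbabilityMeasure Q) (Xt : Fin n → Ω' → ℝ),
        (∀ i, Measurable (Xt i)) → (∀ i, Q.map (Xt i) = P.map (X i)) →
        (∫ ω, (∑ i, Xt i ω) ∂Q) = (∫ ω, (∑ i, X i ω) ∂P) ∧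
        ∀ c : ℝ, (∫ ω, max ((∑ i, Xt i ω) - c) 0 ∂Q) ≤
          ∫ ω, max ((∑ i, X i ω) - c) 0 ∂P) :
    Comonotonic P X := by
  classical
  unfold Comonotonic ComonotonicSet
  intro x hx y hy hex j
  by_contra hcon
  push_neg at hcon
  obtain ⟨i, hxyi⟩ := hex
  simp only [measSupport, Set.mem_setOf_eq] at hx hy
  have hij : i ≠ j := by rintro rfl; exact absurd hxyi (not_lt.2 hcon.le)
  set f : Ω → (Fin n → ℝ) := fun ω k => X k ω with hf_def
  have hf : Measurable f := measurable_pi_lambda _ hX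
  set μ : Measure (Fin n → ℝ) := P.map f with hμ_def
  haveI : IsProbabilityMeasure μ := Measure.isProbabilityMeasure_map hf.aemeasurable
  -- constants
  set g0 : ℝ := min (y i - x i) (x j - y j) with hg0_def
  have hg0 : 0 < g0 := lt_min (by linarith) (by linarith)
  set ε : ℝ := g0 / (6 * (n:ℝ) + 4) with hε_def
  have hε : 0 < ε := by
    have : (0:ℝ) < 6 * (n:ℝ) + 4 := by positivity
    exact div_pos hg0 this
  have hnε : 0 ≤ (n:ℝ) * ε := by positivity
  have hεa : 3 * (n:ℝ) * ε + 2 * ε = g0 / 2 := by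
    rw [hε_def]; field_simp; ring
  have hε2 : 2 * ε ≤ g0 := by linarith
  -- boxes
  set A' : Set (Fin n → ℝ) := Set.univ.pi fun k => Set.Ioo (x k - ε) (x k + ε) with hA'_def
  set B' : Set (Fin n → ℝ) := Set.univ.pi fun k => Set.Ioo (y k - ε) (y k + ε) with hB'_def
  have hA'open : IsOpen A' := isOpen_set_pi Set.finite_univ (fun k _ => isOpen_Ioo)
  have hB'open : IsOpen B' := isOpen_set_pi Set.finite_univ (fun k _ => isOpen_Ioo)
  have hA'm : MeasurableSet A' := hA'open.measurableSet
  have hB'm : MeasurableSet B' := hB'open.measurableSet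
  have hxA' : x ∈ A' := Set.mem_univ_pi.2 fun k => ⟨by linarith, by linarith⟩
  have hyB' : y ∈ B' := Set.mem_univ_pi.2 fun k => ⟨by linarith, by linarith⟩
  have hdisj : Disjoint A' B' := by
    rw [Set.disjoint_left]
    intro u huA huB
    have h1 := (Set.mem_univ_pi.1 huA i).2
    have h2 := (Set.mem_univ_pi.1 huB i).1
    have h3 : g0 ≤ y i - x i := min_le_left _ _
    linarith
  have ha : 0 < μ A' := hx A' hA'open hxA'
  have hb : 0 < μ B' := hy B' hB'open hyB'
  set a : ENNReal := μ A' with ha_def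
  set b : ENNReal := μ B' with hb_def
  have ha0 : a ≠ 0 := ha.ne'
  have hb0 : b ≠ 0 := hb.ne'
  have haT : a ≠ ⊤ := measure_ne_top μ A'
  have hbT : b ≠ ⊤ := measure_ne_top μ B'
  set m : ENNReal := min a b with hm_def
  have hm0 : m ≠ 0 := (lt_min ha hb).ne'
  have hma : m ≤ a := min_le_left _ _
  have hmb : m ≤ b := min_le_right _ _
  have hmT : m ≠ ⊤ := ne_top_of_le_ne_top haT hma
  have hma1 : m / a ≤ 1 := by
    rw [← ENNReal.div_self ha0 haT]; exact ENNReal.div_le_div_right hma a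
  have hmb1 : m / b ≤ 1 := by
    rw [← ENNReal.div_self hb0 hbT]; exact ENNReal.div_le_div_right hmb b
  -- normalized restrictions and product
  set μA : Measure (Fin n → ℝ) := a⁻¹ • μ.restrict A' with hμA_def
  set μB : Measure (Fin n → ℝ) := b⁻¹ • μ.restrict B' with hμB_def
  haveI hμAP : IsProbabilityMeasure μA := by
    constructor
    rw [hμA_def, Measure.smul_apply, Measure.restrict_apply_univ, smul_eq_mul]
    exact ENNReal.inv_mul_cancel ha0 haT
  haveI hμBP : IsProbabilityMeasure μB := by
    constructor
    rw [hμB_def, Measure.smul_apply, Measure.restrict_apply_univ, smul_eq_mul]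
    exact ENNReal.inv_mul_cancel hb0 hbT
  set κ : Measure ((Fin n → ℝ) × (Fin n → ℝ)) := μA.prod μB with hκ_def
  haveI hκP : IsProbabilityMeasure κ := by rw [hκ_def]; infer_instance
  -- swap maps
  set G : Set ((Fin n → ℝ) × (Fin n → ℝ)) := {p | ∑ k, p.1 k ≤ ∑ k, p.2 k} with hG_def
  have hsum1 : Measurable fun p : (Fin n → ℝ) × (Fin n → ℝ) => ∑ k, p.1 k :=
    Finset.measurable_sum _ fun k _ => (measurable_pi_apply k).comp measurable_fst
  have hsum2 : Measurable fun p : (Fin n → ℝ) × (Fin n → ℝ) => ∑ k, p.2 k :=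
    Finset.measurable_sum _ fun k _ => (measurable_pi_apply k).comp measurable_snd
  have hGm : MeasurableSet G := measurableSet_le hsum1 hsum2
  set s : (Fin n → ℝ) × (Fin n → ℝ) → (Fin n → ℝ) :=
    fun p => if p ∈ G then Function.update p.1 j (p.2 j) else Function.update p.1 i (p.2 i)
    with hs_def
  set t : (Fin n → ℝ) × (Fin n → ℝ) → (Fin n → ℝ) :=
    fun p => if p ∈ G then Function.update p.2 j (p.1 j) else Function.update p.2 i (p.1 i)
    with ht_def
  have hupd_meas : ∀ (l : Fin n),
      Measurable (fun p : (Fin n → ℝ) × (Fin n → ℝ) => Function.update p.1 l (p.2 l)) := by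
    intro l
    apply measurable_pi_lambda
    intro k
    rcases eq_or_ne k l with rfl | hk
    · simp only [Function.update_self]
      exact (measurable_pi_apply k).comp measurable_snd
    · simp only [Function.update_of_ne hk]
      exact (measurable_pi_apply k).comp measurable_fst
  have hupd_meas2 : ∀ (l : Fin n),
      Measurable (fun p : (Fin n → ℝ) × (Fin n → ℝ) => Function.update p.2 l (p.1 l)) := by
    intro l
    apply measurable_pi_lambda
    intro k
    rcases eq_or_ne k l with rfl | hk
    · simp only [Function.update_self]
      exact (measurable_pi_apply k).comp measurable_fst
    · simp only [Function.update_of_ne hk]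
      exact (measurable_pi_apply k).comp measurable_snd
  have hs : Measurable s := Measurable.ite hGm (hupd_meas j) (hupd_meas i)
  have ht : Measurable t := Measurable.ite hGm (hupd_meas2 j) (hupd_meas2 i)
  -- the key marginal computation
  have hsplit : ∀ W : Set ((Fin n → ℝ) × (Fin n → ℝ)), κ (G ∩ W) + κ (Gᶜ ∩ W) = κ W := by
    intro W
    rw [Set.inter_comm G W, Set.inter_comm Gᶜ W, ← Set.diff_eq]
    exact measure_inter_add_diff W hGm
  have hUval : ∀ (k : Fin n) (S : Set ℝ),
      κ {p : (Fin n → ℝ) × (Fin n → ℝ) | p.1 k ∈ S} = μA ((fun w : Fin n → ℝ => w k) ⁻¹' S) := by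
    intro k S
    have : {p : (Fin n → ℝ) × (Fin n → ℝ) | p.1 k ∈ S}
        = ((fun w : Fin n → ℝ => w k) ⁻¹' S) ×ˢ (Set.univ : Set (Fin n → ℝ)) := by
      ext p; simp [Set.mem_prod]
    rw [this, hκ_def, Measure.prod_prod, measure_univ, mul_one]
  have hVval : ∀ (k : Fin n) (S : Set ℝ),
      κ {p : (Fin n → ℝ) × (Fin n → ℝ) | p.2 k ∈ S} = μB ((fun w : Fin n → ℝ => w k) ⁻¹' S) := by
    intro k S
    have : {p : (Fin n → ℝ) × (Fin n → ℝ) | p.2 k ∈ S}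
        = (Set.univ : Set (Fin n → ℝ)) ×ˢ ((fun w : Fin n → ℝ => w k) ⁻¹' S) := by
      ext p; simp [Set.mem_prod]
    rw [this, hκ_def, Measure.prod_prod, measure_univ, one_mul]
  have C1 : ∀ (k : Fin n) (S : Set ℝ), MeasurableSet S →
      κ (s ⁻¹' ((fun w : Fin n → ℝ => w k) ⁻¹' S)) + κ (t ⁻¹' ((fun w : Fin n → ℝ => w k) ⁻¹' S))
        = μA ((fun w : Fin n → ℝ => w k) ⁻¹' S) + μB ((fun w : Fin n → ℝ => w k) ⁻¹' S) := by
    intro k S hS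
    set U : Set ((Fin n → ℝ) × (Fin n → ℝ)) := {p | p.1 k ∈ S} with hU_def
    set V : Set ((Fin n → ℝ) × (Fin n → ℝ)) := {p | p.2 k ∈ S} with hV_def
    have hUm : MeasurableSet U := hS.preimage ((measurable_pi_apply k).comp measurable_fst)
    have hVm : MeasurableSet V := hS.preimage ((measurable_pi_apply k).comp measurable_snd)
    rcases eq_or_ne k j with rfl | hkj
    · -- k = j
      have e1 : s ⁻¹' ((fun w : Fin n → ℝ => w k) ⁻¹' S) = (G ∩ V) ∪ (Gᶜ ∩ U) := by
        ext p
        by_cases hp : p ∈ G <;>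
          simp [hs_def, hp, Function.update_self, Function.update_of_ne (Ne.symm hij),
            hU_def, hV_def]
      have e2 : t ⁻¹' ((fun w : Fin n → ℝ => w k) ⁻¹' S) = (G ∩ U) ∪ (Gᶜ ∩ V) := by
        ext p
        by_cases hp : p ∈ G <;>
          simp [ht_def, hp, Function.update_self, Function.update_of_ne (Ne.symm hij),
            hU_def, hV_def]
      rw [e1, e2, measure_union (Disjoint.mono Set.inter_subset_left Set.inter_subset_left
          disjoint_compl_right) (hGm.compl.inter hUm),
        measure_union (Disjoint.mono Set.inter_subset_left Set.inter_subset_left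
          disjoint_compl_right) (hGm.compl.inter hVm)]
      calc κ (G ∩ V) + κ (Gᶜ ∩ U) + (κ (G ∩ U) + κ (Gᶜ ∩ V))
          = (κ (G ∩ U) + κ (Gᶜ ∩ U)) + (κ (G ∩ V) + κ (Gᶜ ∩ V)) := by ring
        _ = κ U + κ V := by rw [hsplit U, hsplit V]
        _ = _ := by rw [hUval k S, hVval k S]
    · rcases eq_or_ne k i with rfl | hki
      · -- k = i
        have e1 : s ⁻¹' ((fun w : Fin n → ℝ => w k) ⁻¹' S) = (G ∩ U) ∪ (Gᶜ ∩ V) := by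
          ext p
          by_cases hp : p ∈ G <;>
            simp [hs_def, hp, Function.update_self, Function.update_of_ne hij,
              hU_def, hV_def]
        have e2 : t ⁻¹' ((fun w : Fin n → ℝ => w k) ⁻¹' S) = (G ∩ V) ∪ (Gᶜ ∩ U) := by
          ext p
          by_cases hp : p ∈ G <;>
            simp [ht_def, hp, Function.update_self, Function.update_of_ne hij,
              hU_def, hV_def]
        rw [e1, e2, measure_union (Disjoint.mono Set.inter_subset_left Set.inter_subset_left
            disjoint_compl_right) (hGm.compl.inter hVm),
          measure_union (Disjoint.mono Set.inter_subset_left Set.inter_subset_left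
            disjoint_compl_right) (hGm.compl.inter hUm)]
        calc κ (G ∩ U) + κ (Gᶜ ∩ V) + (κ (G ∩ V) + κ (Gᶜ ∩ U))
            = (κ (G ∩ U) + κ (Gᶜ ∩ U)) + (κ (G ∩ V) + κ (Gᶜ ∩ V)) := by ring
          _ = κ U + κ V := by rw [hsplit U, hsplit V]
          _ = _ := by rw [hUval k S, hVval k S]
      · -- k ∉ {i, j}
        have e1 : s ⁻¹' ((fun w : Fin n → ℝ => w k) ⁻¹' S) = U := by
          ext p
          by_cases hp : p ∈ G <;>
            simp [hs_def, hp, Function.update_of_ne hkj, Function.update_of_ne hki,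
              hU_def]
        have e2 : t ⁻¹' ((fun w : Fin n → ℝ => w k) ⁻¹' S) = V := by
          ext p
          by_cases hp : p ∈ G <;>
            simp [ht_def, hp, Function.update_of_ne hkj, Function.update_of_ne hki,
              hV_def]
        rw [e1, e2, hUval k S, hVval k S]
  -- the modified measure
  set C : Set (Fin n → ℝ) := A' ∪ B' with hC_def
  have hCm : MeasurableSet C := hA'm.union hB'm
  set ν : Measure (Fin n → ℝ) :=
    μ.restrict Cᶜ + ((1 - m / a) • μ.restrict A' + (1 - m / b) • μ.restrict B')
      + (m • κ.map s + m • κ.map t) with hν_def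
  -- values of ν on coordinate preimages
  have C2 : ∀ (k : Fin n) (S : Set ℝ), MeasurableSet S →
      ν ((fun w : Fin n → ℝ => w k) ⁻¹' S) = μ ((fun w : Fin n → ℝ => w k) ⁻¹' S) := by
    intro k S hS
    have hEm : MeasurableSet ((fun w : Fin n → ℝ => w k) ⁻¹' S) :=
      hS.preimage (measurable_pi_apply k)
    set E : Set (Fin n → ℝ) := (fun w : Fin n → ℝ => w k) ⁻¹' S with hE_def
    have expand : ν E = μ.restrict Cᶜ E + ((1 - m / a) * μ.restrict A' E
        + (1 - m / b) * μ.restrict B' E) + (m * κ (s ⁻¹' E) + m * κ (t ⁻¹' E)) := by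
      rw [hν_def]
      simp only [Measure.add_apply, Measure.smul_apply, smul_eq_mul]
      rw [Measure.map_apply hs hEm, Measure.map_apply ht hEm]
    have hA'E : μA E = a⁻¹ * μ.restrict A' E := by
      rw [hμA_def, Measure.smul_apply, smul_eq_mul]
    have hB'E : μB E = b⁻¹ * μ.restrict B' E := by
      rw [hμB_def, Measure.smul_apply, smul_eq_mul]
    have hswap : m * κ (s ⁻¹' E) + m * κ (t ⁻¹' E)
        = (m / a) * μ.restrict A' E + (m / b) * μ.restrict B' E := by
      rw [← mul_add, C1 k S hS, mul_add, hA'E, hB'E, ← mul_assoc, ← mul_assoc,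
        ENNReal.div_eq_inv_mul, ENNReal.div_eq_inv_mul, mul_comm m a⁻¹, mul_comm m b⁻¹]
    have habs : ∀ (z w : ENNReal), w ≤ 1 → (1 - w) * z + w * z = z := by
      intro z w hw
      rw [← add_mul, tsub_add_cancel_of_le hw, one_mul]
    have final : ν E = μ.restrict Cᶜ E + (μ.restrict A' E + μ.restrict B' E) := by
      rw [expand, hswap]
      have e1 : (1 - m / a) * μ.restrict A' E + (1 - m / b) * μ.restrict B' E
          + ((m / a) * μ.restrict A' E + (m / b) * μ.restrict B' E)
          = ((1 - m / a) * μ.restrict A' E + (m / a) * μ.restrict A' E)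
            + ((1 - m / b) * μ.restrict B' E + (m / b) * μ.restrict B' E) := by ring
      rw [add_assoc, e1, habs _ _ hma1, habs _ _ hmb1]
    rw [final]
    have e2 : μ.restrict A' E + μ.restrict B' E = μ.restrict C E := by
      rw [hC_def, Measure.restrict_union hdisj hB'm, Measure.add_apply]
    rw [e2, ← Measure.add_apply, add_comm (μ.restrict Cᶜ) (μ.restrict C),
      Measure.restrict_add_restrict_compl hCm]
  have hν_univ : ν Set.univ = 1 := by
    have := C2 i Set.univ MeasurableSet.univ
    simpa using this
  haveI hνP : IsProbabilityMeasure ν := ⟨hν_univ⟩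
  have hmargμ : ∀ k : Fin n, μ.map (fun w => w k) = P.map (X k) := by
    intro k
    rw [hμ_def, Measure.map_map (measurable_pi_apply k) hf]
    rfl
  have hmarg : ∀ k : Fin n, ν.map (fun w => w k) = P.map (X k) := by
    intro k
    rw [← hmargμ k]
    refine Measure.ext fun S hS => ?_
    rw [Measure.map_apply (measurable_pi_apply k) hS,
      Measure.map_apply (measurable_pi_apply k) hS, C2 k S hS]
  -- the threshold
  set c : ℝ := max (∑ k, x k) (∑ k, y k) - 2 * (n:ℝ) * ε with hc_def
  set h : (Fin n → ℝ) → ℝ := fun w => max ((∑ k, w k) - c) 0 with hh_def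
  have hhm : Measurable h := by
    apply Measurable.max _ measurable_const
    exact (Finset.measurable_sum _ fun k _ => measurable_pi_apply k).sub measurable_const
  -- pointwise key estimate
  have hkey : ∀ p : (Fin n → ℝ) × (Fin n → ℝ), p.1 ∈ A' → p.2 ∈ B' →
      g0 / 2 ≤ h (s p) + h (t p) - h p.1 - h p.2 := by
    rintro ⟨u, v⟩ hu hv
    rw [hA'_def] at hu
    rw [hB'_def] at hv
    rw [Set.mem_univ_pi] at hu hv
    simp only [Set.mem_Ioo] at hu hv
    have hsu_ub : ∑ k, u k ≤ ∑ k, x k + (n:ℝ) * ε := by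
      calc ∑ k, u k ≤ ∑ k, (x k + ε) := Finset.sum_le_sum fun k _ => (hu k).2.le
        _ = ∑ k, x k + (n:ℝ) * ε := by
            rw [Finset.sum_add_distrib, Finset.sum_const, Finset.card_univ, Fintype.card_fin,
              nsmul_eq_mul]
    have hsu_lb : ∑ k, x k - (n:ℝ) * ε ≤ ∑ k, u k := by
      have : ∑ k, (x k - ε) ≤ ∑ k, u k := Finset.sum_le_sum fun k _ => (hu k).1.le
      calc ∑ k, x k - (n:ℝ) * ε = ∑ k, (x k - ε) := by
            rw [Finset.sum_sub_distrib, Finset.sum_const, Finset.card_univ, Fintype.card_fin,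
              nsmul_eq_mul]
        _ ≤ ∑ k, u k := this
    have hsv_ub : ∑ k, v k ≤ ∑ k, y k + (n:ℝ) * ε := by
      calc ∑ k, v k ≤ ∑ k, (y k + ε) := Finset.sum_le_sum fun k _ => (hv k).2.le
        _ = ∑ k, y k + (n:ℝ) * ε := by
            rw [Finset.sum_add_distrib, Finset.sum_const, Finset.card_univ, Fintype.card_fin,
              nsmul_eq_mul]
    have hsv_lb : ∑ k, y k - (n:ℝ) * ε ≤ ∑ k, v k := by
      have : ∑ k, (y k - ε) ≤ ∑ k, v k := Finset.sum_le_sum fun k _ => (hv k).1.le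
      calc ∑ k, y k - (n:ℝ) * ε = ∑ k, (y k - ε) := by
            rw [Finset.sum_sub_distrib, Finset.sum_const, Finset.card_univ, Fintype.card_fin,
              nsmul_eq_mul]
        _ ≤ ∑ k, v k := this
    have hmx : ∑ k, x k ≤ c + 2 * (n:ℝ) * ε := by
      have := le_max_left (∑ k, x k) (∑ k, y k); rw [hc_def]; linarith
    have hmy : ∑ k, y k ≤ c + 2 * (n:ℝ) * ε := by
      have := le_max_right (∑ k, x k) (∑ k, y k); rw [hc_def]; linarith
    have hf2 : (∑ k, u k) - c ≤ 3 * (n:ℝ) * ε := by linarith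
    have hf3 : (∑ k, v k) - c ≤ 3 * (n:ℝ) * ε := by linarith
    have hcmax : c ≤ max (∑ k, u k) (∑ k, v k) := by
      rcases max_cases (∑ k, x k) (∑ k, y k) with ⟨hm1, _⟩ | ⟨hm1, _⟩
      · have := le_max_left (∑ k, u k) (∑ k, v k)
        rw [hc_def, hm1]; linarith
      · have := le_max_right (∑ k, u k) (∑ k, v k)
        rw [hc_def, hm1]; linarith
    by_cases hG' : (u, v) ∈ G
    · have hGle : ∑ k, u k ≤ ∑ k, v k := hG'
      have hcv : c ≤ ∑ k, v k := by
        rcases max_cases (∑ k, u k) (∑ k, v k) with ⟨hm1, _⟩ | ⟨hm1, _⟩ <;>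
          rw [hm1] at hcmax <;> linarith
      have hs_eq : s (u, v) = Function.update u j (v j) := by
        rw [hs_def]; exact if_pos hG'
      have ht_eq : t (u, v) = Function.update v j (u j) := by
        rw [ht_def]; exact if_pos hG'
      have hsum_s : ∑ k, Function.update u j (v j) k = ∑ k, u k - u j + v j := by
        rw [Finset.sum_update_of_mem (Finset.mem_univ j), ← Finset.erase_eq,
          Finset.sum_erase_eq_sub (Finset.mem_univ j)]
        ring
      have hsum_t : ∑ k, Function.update v j (u j) k = ∑ k, v k - v j + u j := by
        rw [Finset.sum_update_of_mem (Finset.mem_univ j), ← Finset.erase_eq,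
          Finset.sum_erase_eq_sub (Finset.mem_univ j)]
        ring
      have hd_lb : g0 - 2 * ε ≤ u j - v j := by
        have h1 := (hu j).1
        have h2 := (hv j).2
        have h3 : g0 ≤ x j - y j := min_le_right _ _
        linarith
      have hd0 : 0 ≤ u j - v j := by linarith
      have hmg := max_gain c (3 * (n:ℝ) * ε) (u j - v j) (∑ k, u k) (∑ k, v k)
        hd0 hcv hf2 (by positivity)
      rw [hh_def]
      simp only
      rw [hs_eq, ht_eq, hsum_s, hsum_t]
      have e1 : ∑ k, u k - u j + v j - c = ∑ k, u k - (u j - v j) - c := by ring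
      have e2 : ∑ k, v k - v j + u j - c = ∑ k, v k + (u j - v j) - c := by ring
      rw [e1, e2]
      linarith
    · have hGgt : ∑ k, v k < ∑ k, u k := by
        by_contra hcc
        push_neg at hcc
        exact hG' hcc
      have hcu : c ≤ ∑ k, u k := by
        rcases max_cases (∑ k, u k) (∑ k, v k) with ⟨hm1, _⟩ | ⟨hm1, _⟩ <;>
          rw [hm1] at hcmax <;> linarith
      have hs_eq : s (u, v) = Function.update u i (v i) := by
        rw [hs_def]; exact if_neg hG'
      have ht_eq : t (u, v) = Function.update v i (u i) := by
        rw [ht_def]; exact if_neg hG'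
      have hsum_s : ∑ k, Function.update u i (v i) k = ∑ k, u k - u i + v i := by
        rw [Finset.sum_update_of_mem (Finset.mem_univ i), ← Finset.erase_eq,
          Finset.sum_erase_eq_sub (Finset.mem_univ i)]
        ring
      have hsum_t : ∑ k, Function.update v i (u i) k = ∑ k, v k - v i + u i := by
        rw [Finset.sum_update_of_mem (Finset.mem_univ i), ← Finset.erase_eq,
          Finset.sum_erase_eq_sub (Finset.mem_univ i)]
        ring
      have hd_lb : g0 - 2 * ε ≤ v i - u i := by
        have h1 := (hu i).2
        have h2 := (hv i).1
        have h3 : g0 ≤ y i - x i := min_le_left _ _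
        linarith
      have hd0 : 0 ≤ v i - u i := by linarith
      have hmg := max_gain c (3 * (n:ℝ) * ε) (v i - u i) (∑ k, v k) (∑ k, u k)
        hd0 hcu hf3 (by positivity)
      rw [hh_def]
      simp only
      rw [hs_eq, ht_eq, hsum_s, hsum_t]
      have e1 : ∑ k, u k - u i + v i - c = ∑ k, u k + (v i - u i) - c := by ring
      have e2 : ∑ k, v k - v i + u i - c = ∑ k, v k - (v i - u i) - c := by ring
      rw [e1, e2]
      linarith
  -- integrability with respect to μ
  have hIntP : Integrable (fun ω => max ((∑ k, X k ω) - c) 0) P := by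
    have h1 : Integrable (fun ω => (∑ k, X k ω) - c) P :=
      (integrable_finset_sum Finset.univ fun k _ => hint k).sub (integrable_const c)
    simpa using h1.pos_part
  have hIntμ : Integrable h μ := by
    rw [hμ_def, integrable_map_measure hhm.aestronglyMeasurable hf.aemeasurable]
    exact hIntP
  have hIntA : Integrable h (μ.restrict A') := hIntμ.restrict
  have hIntB : Integrable h (μ.restrict B') := hIntμ.restrict
  have hIntCc : Integrable h (μ.restrict Cᶜ) := hIntμ.restrict
  -- κ-a.e. membership in the boxes
  have hμAA : μA A' = 1 := by
    rw [hμA_def, Measure.smul_apply, Measure.restrict_apply hA'm, Set.inter_self,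
      smul_eq_mul]
    exact ENNReal.inv_mul_cancel ha0 haT
  have hμBB : μB B' = 1 := by
    rw [hμB_def, Measure.smul_apply, Measure.restrict_apply hB'm, Set.inter_self,
      smul_eq_mul]
    exact ENNReal.inv_mul_cancel hb0 hbT
  have hκae : ∀ᵐ p ∂κ, p.1 ∈ A' ∧ p.2 ∈ B' := by
    have h1 : κ (A' ×ˢ B') = 1 := by
      rw [hκ_def, Measure.prod_prod, hμAA, hμBB, one_mul]
    have h2 : κ (A' ×ˢ B')ᶜ = 0 := by
      rw [measure_compl (hA'm.prod hB'm) (measure_ne_top _ _), h1, measure_univ, tsub_self]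
    have h3 : ∀ᵐ p ∂κ, p ∈ A' ×ˢ B' := by
      rw [ae_iff]
      exact h2
    exact h3.mono fun p hp => Set.mem_prod.1 hp
  -- uniform bound for h on images of the boxes
  have hs_cases : ∀ (p : (Fin n → ℝ) × (Fin n → ℝ)) (k : Fin n),
      s p k = p.1 k ∨ s p k = p.2 k := by
    intro p k
    rw [hs_def]
    by_cases hp : p ∈ G
    · simp only [if_pos hp, Function.update_apply]
      by_cases hk : k = j
      · right; rw [if_pos hk, hk]
      · left; rw [if_neg hk]
    · simp only [if_neg hp, Function.update_apply]
      by_cases hk : k = i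
      · right; rw [if_pos hk, hk]
      · left; rw [if_neg hk]
  have ht_cases : ∀ (p : (Fin n → ℝ) × (Fin n → ℝ)) (k : Fin n),
      t p k = p.1 k ∨ t p k = p.2 k := by
    intro p k
    rw [ht_def]
    by_cases hp : p ∈ G
    · simp only [if_pos hp, Function.update_apply]
      by_cases hk : k = j
      · left; rw [if_pos hk, hk]
      · right; rw [if_neg hk]
    · simp only [if_neg hp, Function.update_apply]
      by_cases hk : k = i
      · left; rw [if_pos hk, hk]
      · right; rw [if_neg hk]
  set CB : ℝ := (∑ k, (|x k| + |y k| + 2 * ε)) + |c| with hCB_def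
  have hboxabs : ∀ (p : (Fin n → ℝ) × (Fin n → ℝ)), p.1 ∈ A' → p.2 ∈ B' →
      ∀ k, |p.1 k| ≤ |x k| + |y k| + 2 * ε ∧ |p.2 k| ≤ |x k| + |y k| + 2 * ε := by
    rintro ⟨u, v⟩ hu hv k
    rw [hA'_def] at hu
    rw [hB'_def] at hv
    have h1 := (Set.mem_univ_pi.1 hu k)
    have h2 := (Set.mem_univ_pi.1 hv k)
    simp only [Set.mem_Ioo] at h1 h2
    constructor
    · rw [abs_le]
      constructor
      · have := neg_abs_le (x k); have := abs_nonneg (y k); linarith [h1.1]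
      · have := le_abs_self (x k); have := abs_nonneg (y k); linarith [h1.2]
    · rw [abs_le]
      constructor
      · have := neg_abs_le (y k); have := abs_nonneg (x k); linarith [h2.1]
      · have := le_abs_self (y k); have := abs_nonneg (x k); linarith [h2.2]
  have hbound : ∀ w : Fin n → ℝ, (∀ k, |w k| ≤ |x k| + |y k| + 2 * ε) → ‖h w‖ ≤ CB := by
    intro w hw
    rw [hh_def, Real.norm_eq_abs]
    have h0 : max ((∑ k, w k) - c) 0 ≤ |(∑ k, w k) - c| :=
      max_le (le_abs_self _) (abs_nonneg _)
    have h1 : |max ((∑ k, w k) - c) 0| = max ((∑ k, w k) - c) 0 :=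
      abs_of_nonneg (le_max_right _ _)
    have h2 : |∑ k, w k| ≤ ∑ k, (|x k| + |y k| + 2 * ε) :=
      (Finset.abs_sum_le_sum_abs _ _).trans (Finset.sum_le_sum fun k _ => hw k)
    have h3 : |(∑ k, w k) - c| ≤ |∑ k, w k| + |c| := abs_sub _ _
    rw [hCB_def]
    simp only
    linarith
  -- integrability over κ
  have hintS : Integrable (fun p => h (s p)) κ := by
    refine Integrable.mono' (integrable_const CB) (hhm.comp hs).aestronglyMeasurable ?_
    refine hκae.mono fun p hp => ?_
    refine hbound (s p) fun k => ?_
    rcases hs_cases p k with e | e <;> rw [e]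
    · exact (hboxabs p hp.1 hp.2 k).1
    · exact (hboxabs p hp.1 hp.2 k).2
  have hintT : Integrable (fun p => h (t p)) κ := by
    refine Integrable.mono' (integrable_const CB) (hhm.comp ht).aestronglyMeasurable ?_
    refine hκae.mono fun p hp => ?_
    refine hbound (t p) fun k => ?_
    rcases ht_cases p k with e | e <;> rw [e]
    · exact (hboxabs p hp.1 hp.2 k).1
    · exact (hboxabs p hp.1 hp.2 k).2
  have hintF : Integrable (fun p : (Fin n → ℝ) × (Fin n → ℝ) => h p.1) κ := by
    refine Integrable.mono' (integrable_const CB) (hhm.comp measurable_fst).aestronglyMeasurable ?_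
    refine hκae.mono fun p hp => ?_
    exact hbound p.1 fun k => (hboxabs p hp.1 hp.2 k).1
  have hintSnd : Integrable (fun p : (Fin n → ℝ) × (Fin n → ℝ) => h p.2) κ := by
    refine Integrable.mono' (integrable_const CB) (hhm.comp measurable_snd).aestronglyMeasurable ?_
    refine hκae.mono fun p hp => ?_
    exact hbound p.2 fun k => (hboxabs p hp.1 hp.2 k).2
  -- the gain integral is at least g0/2
  have hgain : g0 / 2 ≤ ∫ p, (h (s p) + h (t p) - h p.1 - h p.2) ∂κ := by
    have h1 : ∫ _p : (Fin n → ℝ) × (Fin n → ℝ), (g0 / 2 : ℝ) ∂κ = g0 / 2 := by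
      simp [measure_univ]
    calc g0 / 2 = ∫ _p : (Fin n → ℝ) × (Fin n → ℝ), (g0 / 2 : ℝ) ∂κ := h1.symm
      _ ≤ _ := integral_mono_ae (integrable_const _)
          (((hintS.add hintT).sub hintF).sub hintSnd)
          (hκae.mono fun p hp => hkey p hp.1 hp.2)
  have hsplitgain : ∫ p, (h (s p) + h (t p) - h p.1 - h p.2) ∂κ
      = (∫ p, h (s p) ∂κ + ∫ p, h (t p) ∂κ) - ∫ p, h p.1 ∂κ - ∫ p, h p.2 ∂κ := by
    have e1 := integral_sub ((hintS.add hintT).sub hintF) hintSnd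
    have e2 := integral_sub (hintS.add hintT) hintF
    have e3 := integral_add hintS hintT
    simp only [Pi.add_apply, Pi.sub_apply] at e1 e2 e3
    linarith [e1, e2, e3]
  -- identify the marginal integrals over κ
  have hJA : ∫ p, h p.1 ∂κ = (a.toReal)⁻¹ * ∫ w, h w ∂(μ.restrict A') := by
    have e1 : ∫ p, h p.1 ∂κ = ∫ w, h w ∂(κ.map Prod.fst) :=
      (integral_map measurable_fst.aemeasurable hhm.aestronglyMeasurable).symm
    rw [e1, hκ_def, Measure.map_fst_prod, measure_univ, one_smul, hμA_def,
      integral_smul_measure, ENNReal.toReal_inv, smul_eq_mul]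
  have hJB : ∫ p, h p.2 ∂κ = (b.toReal)⁻¹ * ∫ w, h w ∂(μ.restrict B') := by
    have e1 : ∫ p, h p.2 ∂κ = ∫ w, h w ∂(κ.map Prod.snd) :=
      (integral_map measurable_snd.aemeasurable hhm.aestronglyMeasurable).symm
    rw [e1, hκ_def, Measure.map_snd_prod, measure_univ, one_smul, hμB_def,
      integral_smul_measure, ENNReal.toReal_inv, smul_eq_mul]
  -- integrability with respect to the pieces of ν
  have hI2 : Integrable h ((1 - m / a) • μ.restrict A') :=
    hIntA.smul_measure (ne_top_of_le_ne_top ENNReal.one_ne_top tsub_le_self)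
  have hI3 : Integrable h ((1 - m / b) • μ.restrict B') :=
    hIntB.smul_measure (ne_top_of_le_ne_top ENNReal.one_ne_top tsub_le_self)
  have hI4 : Integrable h (m • κ.map s) := by
    refine Integrable.smul_measure ?_ hmT
    rw [integrable_map_measure hhm.aestronglyMeasurable hs.aemeasurable]
    exact hintS
  have hI5 : Integrable h (m • κ.map t) := by
    refine Integrable.smul_measure ?_ hmT
    rw [integrable_map_measure hhm.aestronglyMeasurable ht.aemeasurable]
    exact hintT
  -- the integral of h with respect to ν
  have hIν : ∫ w, h w ∂ν = ∫ w, h w ∂(μ.restrict Cᶜ)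
      + ((1 - m / a).toReal * ∫ w, h w ∂(μ.restrict A')
        + (1 - m / b).toReal * ∫ w, h w ∂(μ.restrict B'))
      + (m.toReal * ∫ p, h (s p) ∂κ + m.toReal * ∫ p, h (t p) ∂κ) := by
    rw [hν_def,
      integral_add_measure (hIntCc.add_measure (hI2.add_measure hI3)) (hI4.add_measure hI5),
      integral_add_measure hIntCc (hI2.add_measure hI3),
      integral_add_measure hI2 hI3, integral_add_measure hI4 hI5,
      integral_smul_measure, integral_smul_measure, integral_smul_measure,
      integral_smul_measure,
      integral_map hs.aemeasurable hhm.aestronglyMeasurable,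
      integral_map ht.aemeasurable hhm.aestronglyMeasurable]
    simp only [smul_eq_mul]
  have hIμ : ∫ w, h w ∂μ = ∫ w, h w ∂(μ.restrict A') + ∫ w, h w ∂(μ.restrict B')
      + ∫ w, h w ∂(μ.restrict Cᶜ) := by
    conv_lhs => rw [← Measure.restrict_add_restrict_compl (μ := μ) hCm]
    rw [show μ.restrict C = μ.restrict A' + μ.restrict B' by
      rw [hC_def, Measure.restrict_union hdisj hB'm]]
    rw [integral_add_measure (hIntA.add_measure hIntB) hIntCc,
      integral_add_measure hIntA hIntB]
  -- scalar facts
  have haR : 0 < a.toReal := ENNReal.toReal_pos ha0 haT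
  have hbR : 0 < b.toReal := ENNReal.toReal_pos hb0 hbT
  have hmR : 0 < m.toReal := ENNReal.toReal_pos hm0 hmT
  have hsa : (1 - m / a).toReal = 1 - m.toReal / a.toReal := by
    rw [ENNReal.toReal_sub_of_le hma1 ENNReal.one_ne_top, ENNReal.toReal_one,
      ENNReal.toReal_div]
  have hsb : (1 - m / b).toReal = 1 - m.toReal / b.toReal := by
    rw [ENNReal.toReal_sub_of_le hmb1 ENNReal.one_ne_top, ENNReal.toReal_one,
      ENNReal.toReal_div]
  -- the comparison of the two integrals
  have hcompare : ∫ w, h w ∂ν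
      = ∫ w, h w ∂μ + m.toReal * ((∫ p, h (s p) ∂κ + ∫ p, h (t p) ∂κ)
        - ∫ p, h p.1 ∂κ - ∫ p, h p.2 ∂κ) := by
    rw [hIν, hIμ, hsa, hsb, hJA, hJB]
    field_simp
    ring
  have hstrict : ∫ w, h w ∂μ < ∫ w, h w ∂ν := by
    rw [hcompare]
    have h1 : 0 < m.toReal * (g0 / 2) := mul_pos hmR (by linarith)
    have h2 : m.toReal * (g0 / 2) ≤ m.toReal * ((∫ p, h (s p) ∂κ + ∫ p, h (t p) ∂κ)
        - ∫ p, h p.1 ∂κ - ∫ p, h p.2 ∂κ) := by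
      apply mul_le_mul_of_nonneg_left _ hmR.le
      rw [← hsplitgain]
      exact hgain
    linarith
  -- invoke the hypothesis
  obtain ⟨-, hle⟩ := hcx (Fin n → ℝ) inferInstance ν hνP (fun k w => w k)
    (fun k => measurable_pi_apply k) hmarg
  have hle' := hle c
  have hLHS : ∫ w, max ((∑ k, (fun (k : Fin n) (w : Fin n → ℝ) => w k) k w) - c) 0 ∂ν
      = ∫ w, h w ∂ν := by
    rw [hh_def]
  have hRHS : ∫ ω, max ((∑ k, X k ω) - c) 0 ∂P = ∫ w, h w ∂μ := by
    rw [hμ_def, integral_map hf.aemeasurable hhm.aestronglyMeasurable]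
  rw [hLHS, hRHS] at hle'
  exact absurd hle' (not_le.2 hstrict)
end

section
/- Let X₁, …, Xₙ be integrable random variables and Y₁, …, Yₙ integrable random variables with Yᵢ having the same distribution as Xᵢ for each i, (Y₁,…,Yₙ) comonotonic, and ∑ᵢ Yᵢ having the same distribution as ∑ᵢ Xᵢ. Then (X₁, …, Xₙ) is comonotonic. -/
open MeasureTheory ProbabilityTheory
open scoped NNReal

section Aux

lemma sum_max_of_comparable {n : ℕ} (u : Fin n → ℝ)
    (h : (∀ k, u k ≤ 0) ∨ (∀ k, 0 ≤ u k)) :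
    ∑ k, max (u k) 0 = max (∑ k, u k) 0 := by
  rcases h with h | h
  · rw [max_eq_right (Finset.sum_nonpos fun k _ => h k)]
    exact Finset.sum_eq_zero fun k _ => max_eq_right (h k)
  · rw [max_eq_left (Finset.sum_nonneg fun k _ => h k)]
    exact Finset.sum_congr rfl fun k _ => max_eq_left (h k)

lemma comparable_of_sum_max {n : ℕ} (u : Fin n → ℝ)
    (h : ∑ k, max (u k) 0 = max (∑ k, u k) 0) :
    (∀ k, u k ≤ 0) ∨ (∀ k, 0 ≤ u k) := by
  rcases le_or_gt (∑ k, u k) 0 with hs | hs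
  · left
    have h0 : ∑ k, max (u k) 0 = 0 := by rw [h, max_eq_right hs]
    intro k
    have hk := (Finset.sum_eq_zero_iff_of_nonneg
      (fun k _ => le_max_right (u k) 0)).1 h0 k (Finset.mem_univ k)
    calc u k ≤ max (u k) 0 := le_max_left _ _
      _ = 0 := hk
  · right
    have h0 : ∑ k, (max (u k) 0 - u k) = 0 := by
      rw [Finset.sum_sub_distrib, h, max_eq_left hs.le, sub_self]
    intro k
    have hk := (Finset.sum_eq_zero_iff_of_nonneg
      (fun k _ => sub_nonneg.2 (le_max_left (u k) 0))).1 h0 k (Finset.mem_univ k)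
    have hmax : max (u k) 0 = u k := by linarith
    calc (0:ℝ) ≤ max (u k) 0 := le_max_right _ _
      _ = u k := hmax

lemma measSupport_isClosed {E : Type*} [TopologicalSpace E] [MeasurableSpace E]
    (μ : Measure E) : IsClosed (measSupport μ) := by
  rw [← isOpen_compl_iff, isOpen_iff_forall_mem_open]
  intro x hx
  simp only [measSupport, Set.mem_compl_iff, Set.mem_setOf_eq, not_forall] at hx
  obtain ⟨U, hU, hxU, hμU⟩ := hx
  refine ⟨U, fun y hy hy' => hμU (hy' U hU hy), hU, hxU⟩

lemma measure_compl_measSupport {E : Type*} [TopologicalSpace E] [MeasurableSpace E]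
    [SecondCountableTopology E]
    (μ : Measure E) : μ (measSupport μ)ᶜ = 0 := by
  obtain ⟨T, hTc, hTsub, hTeq⟩ := TopologicalSpace.isOpen_sUnion_countable
    {U : Set E | IsOpen U ∧ μ U = 0} (fun s hs => hs.1)
  have hcompl : (measSupport μ)ᶜ = ⋃₀ {U : Set E | IsOpen U ∧ μ U = 0} := by
    ext x
    simp only [measSupport, Set.mem_compl_iff, Set.mem_setOf_eq, not_forall, Set.mem_sUnion]
    constructor
    · rintro ⟨U, hU, hxU, hμU⟩
      exact ⟨U, ⟨hU, by simpa using hμU⟩, hxU⟩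
    · rintro ⟨U, ⟨hU, hμU⟩, hxU⟩
      exact ⟨U, hU, hxU, by simp [hμU]⟩
  rw [hcompl, ← hTeq]
  exact (measure_sUnion_null_iff hTc).2 fun s hs => (hTsub hs).2

lemma measSupport_subset {E : Type*} [TopologicalSpace E] [MeasurableSpace E] {μ : Measure E}
    {C : Set E} (hC : IsClosed C) (hfull : μ Cᶜ = 0) : measSupport μ ⊆ C := by
  intro x hx
  by_contra hxC
  have := hx Cᶜ hC.isOpen_compl hxC
  rw [hfull] at this
  exact lt_irrefl 0 this

end Aux

theorem comonotonic_of_sum_distrib_eq {Ω : Type*} [MeasurableSpace Ω]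
    (P : Measure Ω) [IsProbabilityMeasure P]
    {n : ℕ} (X Y : Fin n → Ω → ℝ)
    (hX : ∀ i, Measurable (X i)) (hY : ∀ i, Measurable (Y i))
    (hintX : ∀ i, Integrable (X i) P) (hintY : ∀ i, Integrable (Y i) P)
    (hmarg : ∀ i, P.map (Y i) = P.map (X i))
    (hYcom : Comonotonic P Y)
    (hsum : P.map (fun ω => ∑ i, Y i ω) = P.map (fun ω => ∑ i, X i ω)) :
    Comonotonic P X := by
  classical
  have hXvm : Measurable (fun ω i => X i ω : Ω → Fin n → ℝ) :=
    measurable_pi_lambda _ hX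
  have hYvm : Measurable (fun ω i => Y i ω : Ω → Fin n → ℝ) :=
    measurable_pi_lambda _ hY
  set μX := P.map (fun ω i => X i ω) with hμX
  set μY := P.map (fun ω i => Y i ω) with hμY
  set B := measSupport μY with hB
  have hYcom' : ComonotonicSet B := hYcom
  -- B is a chain
  have hchain : ∀ m ∈ B, ∀ m' ∈ B, (∀ k, m k ≤ m' k) ∨ (∀ k, m' k ≤ m k) := by
    intro m hm m' hm'
    by_cases h : ∃ k, m k < m' k
    · exact Or.inl (hYcom' m hm m' hm' h)
    · push_neg at h
      exact Or.inr h
  -- a.e., the Y-vector lies in B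
  have hYB : ∀ᵐ ω ∂P, (fun i => Y i ω) ∈ B := by
    have hBc : MeasurableSet Bᶜ := (measSupport_isClosed μY).isOpen_compl.measurableSet
    have h0 : μY Bᶜ = 0 := measure_compl_measSupport μY
    rw [hμY, Measure.map_apply hYvm hBc] at h0
    rw [ae_iff]
    exact h0
  -- key step : any t comparable to all of B is a.s. comparable to the X-vector,
  -- hence comparable to all of the support of μX
  have key : ∀ t : Fin n → ℝ, (∀ m ∈ B, (∀ k, m k ≤ t k) ∨ (∀ k, t k ≤ m k)) →
      ∀ z ∈ measSupport μX, (∀ k, z k ≤ t k) ∨ (∀ k, t k ≤ z k) := by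
    intro t ht
    set T := ∑ k, t k with hT
    have hc : ∀ c : ℝ, Continuous fun s : ℝ => max (s - c) 0 :=
      fun c => (continuous_id.sub continuous_const).max continuous_const
    -- marginal transfer per coordinate
    have hk : ∀ k : Fin n, ∫ ω, max (X k ω - t k) 0 ∂P = ∫ ω, max (Y k ω - t k) 0 ∂P := by
      intro k
      calc ∫ ω, max (X k ω - t k) 0 ∂P
          = ∫ s, max (s - t k) 0 ∂(P.map (X k)) :=
            (integral_map (hX k).aemeasurable (hc (t k)).aestronglyMeasurable).symm
        _ = ∫ s, max (s - t k) 0 ∂(P.map (Y k)) := by rw [hmarg k]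
        _ = ∫ ω, max (Y k ω - t k) 0 ∂P :=
            integral_map (hY k).aemeasurable (hc (t k)).aestronglyMeasurable
    -- sum transfer
    have hSY : Measurable (fun ω => ∑ k, Y k ω) := Finset.measurable_sum _ fun k _ => hY k
    have hSX : Measurable (fun ω => ∑ k, X k ω) := Finset.measurable_sum _ fun k _ => hX k
    have hsum' : ∫ ω, max (∑ k, Y k ω - T) 0 ∂P = ∫ ω, max (∑ k, X k ω - T) 0 ∂P := by
      calc ∫ ω, max (∑ k, Y k ω - T) 0 ∂P
          = ∫ s, max (s - T) 0 ∂(P.map (fun ω => ∑ k, Y k ω)) :=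
            (integral_map hSY.aemeasurable (hc T).aestronglyMeasurable).symm
        _ = ∫ s, max (s - T) 0 ∂(P.map (fun ω => ∑ k, X k ω)) := by rw [hsum]
        _ = ∫ ω, max (∑ k, X k ω - T) 0 ∂P :=
            integral_map hSX.aemeasurable (hc T).aestronglyMeasurable
    -- a.e. equality for Y
    have haeY : ∀ᵐ ω ∂P, ∑ k, max (Y k ω - t k) 0 = max (∑ k, Y k ω - T) 0 := by
      filter_upwards [hYB] with ω hω
      have hcomp := ht _ hω
      have := sum_max_of_comparable (fun k => Y k ω - t k)
        (by rcases hcomp with h | h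
            · exact Or.inl fun k => sub_nonpos.2 (h k)
            · exact Or.inr fun k => sub_nonneg.2 (h k))
      rwa [Finset.sum_sub_distrib] at this
    -- integrability
    have hintmaxX : ∀ k : Fin n, Integrable (fun ω => max (X k ω - t k) 0) P :=
      fun k => ((hintX k).sub (integrable_const (t k))).pos_part
    have hintmaxY : ∀ k : Fin n, Integrable (fun ω => max (Y k ω - t k) 0) P :=
      fun k => ((hintY k).sub (integrable_const (t k))).pos_part
    have hFint : Integrable (fun ω => ∑ k, max (X k ω - t k) 0) P :=
      integrable_finset_sum _ fun k _ => hintmaxX k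
    have hGint : Integrable (fun ω => max (∑ k, X k ω - T) 0) P :=
      ((integrable_finset_sum _ fun k _ => hintX k).sub (integrable_const T)).pos_part
    -- the chain of integral equalities
    have hIeq : ∫ ω, ∑ k, max (X k ω - t k) 0 ∂P = ∫ ω, max (∑ k, X k ω - T) 0 ∂P := by
      calc ∫ ω, ∑ k, max (X k ω - t k) 0 ∂P
          = ∑ k, ∫ ω, max (X k ω - t k) 0 ∂P := integral_finset_sum _ fun k _ => hintmaxX k
        _ = ∑ k, ∫ ω, max (Y k ω - t k) 0 ∂P := Finset.sum_congr rfl fun k _ => hk k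
        _ = ∫ ω, ∑ k, max (Y k ω - t k) 0 ∂P :=
            (integral_finset_sum _ fun k _ => hintmaxY k).symm
        _ = ∫ ω, max (∑ k, Y k ω - T) 0 ∂P := integral_congr_ae haeY
        _ = ∫ ω, max (∑ k, X k ω - T) 0 ∂P := hsum'
    -- pointwise inequality
    have hFG : ∀ ω, max (∑ k, X k ω - T) 0 ≤ ∑ k, max (X k ω - t k) 0 := by
      intro ω
      apply max_le
      · rw [← Finset.sum_sub_distrib]
        exact Finset.sum_le_sum fun k _ => le_max_left _ _
      · exact Finset.sum_nonneg fun k _ => le_max_right _ _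
    -- conclude a.e. equality
    have h0 : ∫ ω, (∑ k, max (X k ω - t k) 0 - max (∑ k, X k ω - T) 0) ∂P = 0 := by
      rw [integral_sub hFint hGint, hIeq, sub_self]
    have haeX : ∀ᵐ ω ∂P, ∑ k, max (X k ω - t k) 0 - max (∑ k, X k ω - T) 0 = 0 :=
      (integral_eq_zero_iff_of_nonneg_ae
        (Filter.Eventually.of_forall fun ω => sub_nonneg.2 (hFG ω))
        (hFint.sub hGint)).1 h0
    have haeX' : ∀ᵐ ω ∂P, (∀ k, X k ω ≤ t k) ∨ (∀ k, t k ≤ X k ω) := by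
      filter_upwards [haeX] with ω hω
      have heq : ∑ k, max (X k ω - t k) 0 = max (∑ k, (X k ω - t k)) 0 := by
        rw [Finset.sum_sub_distrib]
        linarith [hω]
      rcases comparable_of_sum_max (fun k => X k ω - t k) heq with h | h
      · exact Or.inl fun k => sub_nonpos.1 (h k)
      · exact Or.inr fun k => sub_nonneg.1 (h k)
    -- from a.e. to the support
    set A : Set (Fin n → ℝ) := {z | (∀ k, z k ≤ t k) ∨ (∀ k, t k ≤ z k)} with hA
    have hAclosed : IsClosed A := by
      have h1 : IsClosed {z : Fin n → ℝ | ∀ k, z k ≤ t k} := by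
        have : {z : Fin n → ℝ | ∀ k, z k ≤ t k} = ⋂ k, {z | z k ≤ t k} := by
          ext z; simp
        rw [this]
        exact isClosed_iInter fun k => isClosed_le (continuous_apply k) continuous_const
      have h2 : IsClosed {z : Fin n → ℝ | ∀ k, t k ≤ z k} := by
        have : {z : Fin n → ℝ | ∀ k, t k ≤ z k} = ⋂ k, {z | t k ≤ z k} := by
          ext z; simp
        rw [this]
        exact isClosed_iInter fun k => isClosed_le continuous_const (continuous_apply k)
      exact h1.union h2
    have hAfull : μX Aᶜ = 0 := by
      rw [hμX, Measure.map_apply hXvm hAclosed.measurableSet.compl]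
      have hset : (fun ω i => X i ω) ⁻¹' Aᶜ
          = {ω | ¬ ((∀ k, X k ω ≤ t k) ∨ (∀ k, t k ≤ X k ω))} := rfl
      rw [hset, ← ae_iff]
      exact haeX'
    intro z hz
    exact measSupport_subset hAclosed hAfull hz
  -- transfer of marginal supports
  have hmargsupp : ∀ z ∈ measSupport μX, ∀ (i : Fin n), ∀ δ > (0:ℝ),
      ∃ m ∈ B, |m i - z i| < δ := by
    intro z hz i δ hδ
    set V : Set ℝ := Set.Ioo (z i - δ) (z i + δ) with hV
    set cyl : Set (Fin n → ℝ) := (fun w => w i) ⁻¹' V with hcyl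
    have hcylopen : IsOpen cyl := isOpen_Ioo.preimage (continuous_apply i)
    have hz_cyl : z ∈ cyl := by
      simp only [hcyl, hV, Set.mem_preimage, Set.mem_Ioo]
      constructor <;> linarith
    have h1 : 0 < μX cyl := hz cyl hcylopen hz_cyl
    have hmeasV : MeasurableSet V := measurableSet_Ioo
    have hcylm : MeasurableSet cyl := hcylopen.measurableSet
    have h2 : μX cyl = (P.map (X i)) V := by
      rw [hμX, Measure.map_apply hXvm hcylm, Measure.map_apply (hX i) hmeasV]
      rfl
    have h3 : μY cyl = (P.map (Y i)) V := by
      rw [hμY, Measure.map_apply hYvm hcylm, Measure.map_apply (hY i) hmeasV]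
      rfl
    have h4 : 0 < μY cyl := by
      rw [h3, hmarg i, ← h2]
      exact h1
    by_contra hcon
    push_neg at hcon
    have hsub : cyl ⊆ Bᶜ := by
      intro w hw hwB
      apply absurd _ (not_lt.2 (hcon w hwB))
      have : w i ∈ V := hw
      rw [hV, Set.mem_Ioo] at this
      rw [abs_lt]
      constructor <;> linarith [this.1, this.2]
    have hle := measure_mono hsub (μ := μY)
    rw [measure_compl_measSupport μY] at hle
    exact absurd (le_antisymm hle zero_le) (ne_of_gt h4)
  -- main argument
  intro x hx y hy hex j
  obtain ⟨i, hi⟩ := hex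
  set θ : ℝ := (x i + y i) / 2 with hθ
  set δ : ℝ := (y i - x i) / 2 with hδdef
  have hδ : 0 < δ := by rw [hδdef]; linarith
  obtain ⟨mL, hmLB, hmLclose⟩ := hmargsupp x hx i δ hδ
  obtain ⟨mU, hmUB, hmUclose⟩ := hmargsupp y hy i δ hδ
  have hmLθ : mL i ≤ θ := by
    rw [abs_lt] at hmLclose
    rw [hθ]; rw [hδdef] at hmLclose; linarith [hmLclose.2]
  have hmUθ : θ < mU i := by
    rw [abs_lt] at hmUclose
    rw [hθ]; rw [hδdef] at hmUclose; linarith [hmUclose.1]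
  -- the splitting level
  set L : Set (Fin n → ℝ) := {m | m ∈ B ∧ m i ≤ θ} with hL
  have hmLL : mL ∈ L := ⟨hmLB, hmLθ⟩
  have hLle : ∀ m ∈ L, ∀ k, m k ≤ mU k := by
    rintro m ⟨hmB, hmθ⟩ k
    rcases hchain m hmB mU hmUB with h | h
    · exact h k
    · exact absurd (le_trans (h i) hmθ) (not_le.2 hmUθ)
  set t : Fin n → ℝ := fun k => if k = i then θ else sSup ((fun m => m k) '' L) with htdef
  have hbdd : ∀ k, BddAbove ((fun m => m k) '' L) := by
    intro k
    exact ⟨mU k, by rintro v ⟨m, hm, rfl⟩; exact hLle m hm k⟩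
  have hne : ∀ k, ((fun m => m k) '' L).Nonempty := fun k => ⟨mL k, mL, hmLL, rfl⟩
  have ht : ∀ m ∈ B, (∀ k, m k ≤ t k) ∨ (∀ k, t k ≤ m k) := by
    intro m hm
    rcases le_or_gt (m i) θ with hmθ | hmθ
    · left
      intro k
      simp only [htdef]
      by_cases hk : k = i
      · subst hk; rw [if_pos rfl]; exact hmθ
      · rw [if_neg hk]
        exact le_csSup (hbdd k) ⟨m, ⟨hm, hmθ⟩, rfl⟩
    · right
      intro k
      simp only [htdef]
      by_cases hk : k = i
      · subst hk; rw [if_pos rfl]; exact hmθ.le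
      · rw [if_neg hk]
        apply csSup_le (hne k)
        rintro v ⟨l, ⟨hlB, hlθ⟩, rfl⟩
        rcases hchain l hlB m hm with h | h
        · exact h k
        · exact absurd (le_trans (h i) hlθ) (not_le.2 hmθ)
  have hti : t i = θ := by simp [htdef]
  have hxt : ∀ k, x k ≤ t k := by
    rcases key t ht x hx with h | h
    · exact h
    · exfalso
      have := h i
      rw [hti, hθ] at this
      linarith
  have hty : ∀ k, t k ≤ y k := by
    rcases key t ht y hy with h | h
    · exfalso
      have := h i
      rw [hti, hθ] at this
      linarith
    · exact h
  exact le_trans (hxt j) (hty j)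
end

section
/- If (X₁, …, Xₙ) is a square-integrable random vector following a multivariate normal distribution such that for all i, j, σᵢσⱼ(1 − ρᵢⱼ) = 0 (where σᵢ is the standard deviation of Xᵢ and ρᵢⱼ the correlation of Xᵢ and Xⱼ), then (X₁, …, Xₙ) is comonotonic. -/
open MeasureTheory ProbabilityTheory
open scoped NNReal

/-- Covariance of two real random variables. -/
noncomputable def cov {Ω : Type*} [MeasurableSpace Ω] (P : Measure Ω) (X Y : Ω → ℝ) : ℝ :=
  ∫ ω, (X ω - ∫ ω', X ω' ∂P) * (Y ω - ∫ ω', Y ω' ∂P) ∂P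

/-- Standard deviation. -/
noncomputable def stddev {Ω : Type*} [MeasurableSpace Ω] (P : Measure Ω) (X : Ω → ℝ) : ℝ :=
  Real.sqrt (variance X P)

lemma integrable_mul_L2 {Ω : Type*} [MeasurableSpace Ω] {P : Measure Ω}
    {f g : Ω → ℝ} (hf : MemLp f 2 P) (hg : MemLp g 2 P) :
    Integrable (fun ω => f ω * g ω) P := by
  have h : MemLp (f • g) 1 P := hg.smul hf (hpqr := ⟨by rw [ENNReal.inv_two_add_inv_two, inv_one]⟩)
  rw [memLp_one_iff_integrable] at h
  exact h

lemma sq_integral_zero {Ω : Type*} [MeasurableSpace Ω] {P : Measure Ω}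
    {Z : Ω → ℝ} (hZ : Integrable (fun ω => Z ω ^ 2) P) (h : ∫ ω, Z ω ^ 2 ∂P = 0) :
    ∀ᵐ ω ∂P, Z ω = 0 := by
  have h2 := (integral_eq_zero_iff_of_nonneg (fun ω => sq_nonneg (Z ω)) hZ).mp h
  filter_upwards [h2] with ω hω
  exact by simpa using sq_eq_zero_iff.mp hω

lemma centered_sq_integral {Ω : Type*} [MeasurableSpace Ω] {P : Measure Ω}
    [IsProbabilityMeasure P] {f : Ω → ℝ} (hf : MemLp f 2 P) :
    ∫ ω, (f ω - ∫ ω', f ω' ∂P) ^ 2 ∂P = variance f P := by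
  rw [variance_eq_integral hf.aestronglyMeasurable.aemeasurable]

lemma key {Ω : Type*} [MeasurableSpace Ω] (P : Measure Ω) [IsProbabilityMeasure P]
    (f g : Ω → ℝ) (hf : MemLp f 2 P) (hg : MemLp g 2 P)
    (h : stddev P f * stddev P g - cov P f g = 0) :
    ∀ᵐ ω ∂P, stddev P g * (f ω - ∫ ω', f ω' ∂P) = stddev P f * (g ω - ∫ ω', g ω' ∂P) := by
  set mf := ∫ ω', f ω' ∂P with hmf
  set mg := ∫ ω', g ω' ∂P with hmg
  set sf := stddev P f with hsf
  set sg := stddev P g with hsg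
  have hFm : MemLp (fun ω => f ω - mf) 2 P := hf.sub (memLp_const mf)
  have hGm : MemLp (fun ω => g ω - mg) 2 P := hg.sub (memLp_const mg)
  have hF2 : Integrable (fun ω => (f ω - mf) ^ 2) P := by
    simpa [sq] using integrable_mul_L2 hFm hFm
  have hG2 : Integrable (fun ω => (g ω - mg) ^ 2) P := by
    simpa [sq] using integrable_mul_L2 hGm hGm
  have hFG : Integrable (fun ω => (f ω - mf) * (g ω - mg)) P := integrable_mul_L2 hFm hGm
  have hsf2 : sf ^ 2 = variance f P := Real.sq_sqrt (variance_nonneg _ _)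
  have hsg2 : sg ^ 2 = variance g P := Real.sq_sqrt (variance_nonneg _ _)
  have hcov : cov P f g = sf * sg := by linarith [h]
  have hZm : MemLp (fun ω => sg * (f ω - mf) - sf * (g ω - mg)) 2 P :=
    (hFm.const_mul sg).sub (hGm.const_mul sf)
  have hZ2 : Integrable (fun ω => (sg * (f ω - mf) - sf * (g ω - mg)) ^ 2) P := by
    simpa [sq] using integrable_mul_L2 hZm hZm
  have hI : ∫ ω, (sg * (f ω - mf) - sf * (g ω - mg)) ^ 2 ∂P = 0 := by
    have expand : ∀ ω : Ω, (sg * (f ω - mf) - sf * (g ω - mg)) ^ 2 =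
        sg ^ 2 * (f ω - mf) ^ 2 + sf ^ 2 * (g ω - mg) ^ 2
          - 2 * (sf * sg) * ((f ω - mf) * (g ω - mg)) := fun ω => by ring
    have I1 : Integrable (fun ω => sg ^ 2 * (f ω - mf) ^ 2) P := hF2.const_mul _
    have I2 : Integrable (fun ω => sf ^ 2 * (g ω - mg) ^ 2) P := hG2.const_mul _
    have I3 : Integrable (fun ω => 2 * (sf * sg) * ((f ω - mf) * (g ω - mg))) P :=
      hFG.const_mul _
    have I12 : Integrable (fun ω => sg ^ 2 * (f ω - mf) ^ 2 + sf ^ 2 * (g ω - mg) ^ 2) P :=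
      I1.add I2
    calc ∫ ω, (sg * (f ω - mf) - sf * (g ω - mg)) ^ 2 ∂P
        = ∫ ω, (sg ^ 2 * (f ω - mf) ^ 2 + sf ^ 2 * (g ω - mg) ^ 2
            - 2 * (sf * sg) * ((f ω - mf) * (g ω - mg))) ∂P := by simp_rw [expand]
      _ = sg ^ 2 * ∫ ω, (f ω - mf) ^ 2 ∂P + sf ^ 2 * ∫ ω, (g ω - mg) ^ 2 ∂P
            - 2 * (sf * sg) * ∫ ω, (f ω - mf) * (g ω - mg) ∂P := by
          rw [integral_sub I12 I3, integral_add I1 I2, integral_const_mul,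
            integral_const_mul, integral_const_mul]
      _ = 0 := by
          rw [centered_sq_integral hf, centered_sq_integral hg]
          have : ∫ ω, (f ω - mf) * (g ω - mg) ∂P = sf * sg := hcov
          rw [this, ← hsf2, ← hsg2]; ring
  have := sq_integral_zero hZ2 hI
  filter_upwards [this] with ω hω
  linarith [hω]

theorem gaussian_perfectly_correlated_comonotonic {Ω : Type*} [MeasurableSpace Ω]
    (P : Measure Ω) [IsProbabilityMeasure P]
    {n : ℕ} (X : Fin n → Ω → ℝ) (hX : ∀ i, Measurable (X i))
    (hL2 : ∀ i, MemLp (X i) 2 P)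
    (hgauss : ∀ l : Fin n → ℝ, ∃ (m : ℝ) (v : ℝ≥0),
      P.map (fun ω => ∑ i, l i * X i ω) = gaussianReal m v)
    (hcorr : ∀ i j, stddev P (X i) * stddev P (X j) - cov P (X i) (X j) = 0) :
    Comonotonic P X := by
  classical
  set σ : Fin n → ℝ := fun i => stddev P (X i) with hσdef
  set m : Fin n → ℝ := fun i => ∫ ω, X i ω ∂P with hmdef
  set C : Set (Fin n → ℝ) :=
    {x | (∀ j k, σ k * (x j - m j) = σ j * (x k - m k)) ∧ ∀ j, σ j = 0 → x j = m j}
    with hCdef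
  have hσnn : ∀ j, 0 ≤ σ j := fun j => Real.sqrt_nonneg _
  have hCclosed : IsClosed C := by
    have h1 : IsClosed (⋂ j, ⋂ k,
        {x : Fin n → ℝ | σ k * (x j - m j) = σ j * (x k - m k)}) :=
      isClosed_iInter fun j => isClosed_iInter fun k =>
        isClosed_eq (by fun_prop) (by fun_prop)
    have h2 : IsClosed (⋂ j, {x : Fin n → ℝ | σ j = 0 → x j = m j}) := by
      refine isClosed_iInter fun j => ?_
      by_cases h0 : σ j = 0
      · have : {x : Fin n → ℝ | σ j = 0 → x j = m j} = {x | x j = m j} := by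
          ext x; simp [h0]
        rw [this]
        exact isClosed_eq (continuous_apply j) continuous_const
      · have : {x : Fin n → ℝ | σ j = 0 → x j = m j} = Set.univ := by
          ext x; simp [h0]
        rw [this]
        exact isClosed_univ
    have hCeq : C = (⋂ j, ⋂ k, {x : Fin n → ℝ | σ k * (x j - m j) = σ j * (x k - m k)})
        ∩ ⋂ j, {x : Fin n → ℝ | σ j = 0 → x j = m j} := by
      ext x; simp only [hCdef, Set.mem_inter_iff, Set.mem_iInter, Set.mem_setOf_eq]
    rw [hCeq]
    exact h1.inter h2
  have hae : ∀ᵐ ω ∂P, (fun i => X i ω) ∈ C := by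
    have hA : ∀ᵐ ω ∂P, ∀ j k, σ k * (X j ω - m j) = σ j * (X k ω - m k) := by
      rw [ae_all_iff]; intro j; rw [ae_all_iff]; intro k
      exact key P (X j) (X k) (hL2 j) (hL2 k) (hcorr j k)
    have hB : ∀ᵐ ω ∂P, ∀ j, σ j = 0 → X j ω = m j := by
      rw [ae_all_iff]; intro j
      by_cases h0 : σ j = 0
      · have hv : variance (X j) P = 0 := by
          have := Real.sqrt_eq_zero'.mp h0
          exact le_antisymm this (variance_nonneg _ _)
        have hFm : MemLp (fun ω => X j ω - m j) 2 P := (hL2 j).sub (memLp_const (m j))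
        have hF2 : Integrable (fun ω => (X j ω - m j) ^ 2) P := by
          simpa [sq] using integrable_mul_L2 hFm hFm
        have hI : ∫ ω, (X j ω - m j) ^ 2 ∂P = 0 := by
          rw [centered_sq_integral (hL2 j)] at *
          · exact hv
        have := sq_integral_zero hF2 hI
        filter_upwards [this] with ω hω
        intro _; linarith
      · filter_upwards with ω; exact fun h => absurd h h0
    filter_upwards [hA, hB] with ω h1 h2
    exact ⟨h1, h2⟩
  have hfmeas : Measurable (fun ω i => X i ω) := measurable_pi_lambda _ hX
  have hsub : measSupport (P.map (fun ω i => X i ω)) ⊆ C := by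
    intro x hx
    by_contra hxC
    have hpos := hx Cᶜ hCclosed.isOpen_compl hxC
    rw [Measure.map_apply hfmeas hCclosed.measurableSet.compl] at hpos
    rw [ae_iff] at hae
    have : ((fun ω i => X i ω) ⁻¹' Cᶜ) = {ω | ¬ (fun i => X i ω) ∈ C} := rfl
    rw [this, hae] at hpos
    exact lt_irrefl 0 hpos
  intro x hx y hy hexists j
  obtain ⟨i, hxy⟩ := hexists
  obtain ⟨hx1, hx2⟩ := hsub hx
  obtain ⟨hy1, hy2⟩ := hsub hy
  by_cases h0 : σ i = 0
  · exfalso; rw [hx2 i h0, hy2 i h0] at hxy; exact lt_irrefl _ hxy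
  · have hσi : 0 < σ i := lt_of_le_of_ne (hσnn i) (Ne.symm h0)
    have h1 := hx1 j i
    have h2 := hy1 j i
    nlinarith [mul_nonneg (hσnn j) (sub_nonneg.mpr hxy.le), hσi, h1, h2]
end

section
/- If (X₁, X₂) is a square-integrable bivariate normal random vector and VaR_α(X₁ + X₂) ≤ VaR_α(X₁) + VaR_α(X₂) for all α ∈ (0, 1/2], then VaR_α(X₁ + X₂) = VaR_α(X₁) + VaR_α(X₂) for all α ∈ (0, 1/2], and consequently σ₁σ₂(1 − ρ₁₂) = 0. -/
open MeasureTheory ProbabilityTheory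
open scoped NNReal

section VaRAuxSection
open Set
open scoped ENNReal

namespace VaRAux

noncomputable def qtl (μ : Measure ℝ) (α : ℝ) : ℝ :=
  sInf {x : ℝ | α ≤ (μ (Iic x)).toReal}

lemma monotone_cdf (μ : Measure ℝ) [IsFiniteMeasure μ] :
    Monotone (fun x => (μ (Iic x)).toReal) := fun x y hxy =>
  ENNReal.toReal_mono (measure_ne_top μ _) (measure_mono (Iic_subset_Iic.2 hxy))

lemma std_symm : (gaussianReal 0 1).map (fun x => (-1 : ℝ) * x) = gaussianReal 0 1 := by
  rw [show (fun x : ℝ => (-1:ℝ) * x) = ((-1:ℝ) * ·) from rfl, gaussianReal_map_const_mul]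
  norm_num

lemma std_cdf_zero : ((gaussianReal 0 1) (Iic 0)).toReal = 1 / 2 := by
  have h1 : gaussianReal 0 1 (Iic 0) = gaussianReal 0 1 (Ici 0) := by
    conv_lhs => rw [← std_symm]
    rw [Measure.map_apply (by fun_prop) measurableSet_Iic]
    congr 1
    ext x
    simp only [mem_preimage, mem_Iic, mem_Ici]
    constructor <;> intro h <;> linarith
  have h0 : gaussianReal 0 1 ({0} : Set ℝ) = 0 :=
    gaussianReal_absolutelyContinuous 0 one_ne_zero (measure_singleton 0)
  have h2 : gaussianReal 0 1 (Ici 0) = gaussianReal 0 1 (Ioi 0) := by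
    rw [show Ici (0:ℝ) = Ioi 0 ∪ {0} by
      ext x; simp [le_iff_lt_or_eq, eq_comm, or_comm]]
    rw [measure_union (by simp) (measurableSet_singleton 0), h0, add_zero]
  have h3 : gaussianReal 0 1 (Iic 0) + gaussianReal 0 1 (Ioi 0) = 1 := by
    rw [← measure_union (Iic_disjoint_Ioi le_rfl) measurableSet_Ioi, Iic_union_Ioi,
      measure_univ]
  rw [h1, h2] at h3
  have hne : gaussianReal 0 1 (Ioi 0) ≠ ⊤ := measure_ne_top _ _
  have := congrArg ENNReal.toReal h3
  rw [ENNReal.toReal_add hne hne, ENNReal.toReal_one] at this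
  rw [h1, h2]
  linarith

lemma pdf_std_le (x : ℝ) : gaussianPDF 0 1 x ≤ ENNReal.ofReal (2/5) := by
  rw [gaussianPDF]
  apply ENNReal.ofReal_le_ofReal
  rw [gaussianPDFReal]
  have hπ : (3.141592 : ℝ) < Real.pi := Real.pi_gt_d6
  have h1 : (5/2 : ℝ) ≤ Real.sqrt (2 * Real.pi * (1:ℝ≥0)) := by
    rw [Real.le_sqrt (by norm_num) (by positivity)]
    push_cast
    nlinarith
  have h2 : (Real.sqrt (2 * Real.pi * (1:ℝ≥0)))⁻¹ ≤ 2/5 := by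
    rw [inv_le_comm₀ (by positivity) (by norm_num)]
    linarith [h1]
  calc (Real.sqrt (2 * Real.pi * (1:ℝ≥0)))⁻¹ * Real.exp (-(x - 0)^2 / (2 * (1:ℝ≥0)))
      ≤ (Real.sqrt (2 * Real.pi * (1:ℝ≥0)))⁻¹ * 1 := by
        apply mul_le_mul_of_nonneg_left _ (by positivity)
        rw [Real.exp_le_one_iff]
        have : (0:ℝ) ≤ (x-0)^2 := sq_nonneg _
        push_cast
        nlinarith
    _ ≤ 2/5 := by rw [mul_one]; exact h2

lemma std_cdf_neg_half : (1/4 : ℝ) ≤ ((gaussianReal 0 1) (Iic (-(1/2)))).toReal := by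
  have hsplit : (gaussianReal 0 1) (Iic (0:ℝ))
      = (gaussianReal 0 1) (Iic (-(1/2))) + (gaussianReal 0 1) (Ioc (-(1/2)) 0) := by
    rw [← measure_union (Iic_disjoint_Ioc le_rfl) measurableSet_Ioc,
      Iic_union_Ioc_eq_Iic (by norm_num : (-(1/2) : ℝ) ≤ 0)]
  have hbound : (gaussianReal 0 1) (Ioc (-(1/2):ℝ) 0) ≤ ENNReal.ofReal (1/5) := by
    rw [gaussianReal_apply 0 one_ne_zero]
    calc ∫⁻ x in Ioc (-(1/2):ℝ) 0, gaussianPDF 0 1 x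
        ≤ ∫⁻ _ in Ioc (-(1/2):ℝ) 0, ENNReal.ofReal (2/5) :=
          lintegral_mono fun x => pdf_std_le x
      _ = ENNReal.ofReal (2/5) * volume (Ioc (-(1/2):ℝ) 0) := by
          rw [setLIntegral_const]
      _ = ENNReal.ofReal (1/5) := by
          rw [Real.volume_Ioc, ← ENNReal.ofReal_mul (by norm_num)]
          norm_num
  have h1 : ((gaussianReal 0 1) (Ioc (-(1/2):ℝ) 0)).toReal ≤ 1/5 := by
    refine le_trans (ENNReal.toReal_mono (by simp) hbound) ?_
    rw [ENNReal.toReal_ofReal (by norm_num)]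
  have h2 : ((gaussianReal 0 1) (Iic (0:ℝ))).toReal
      = ((gaussianReal 0 1) (Iic (-(1/2)))).toReal
        + ((gaussianReal 0 1) (Ioc (-(1/2)) 0)).toReal := by
    rw [hsplit, ENNReal.toReal_add (measure_ne_top _ _) (measure_ne_top _ _)]
  rw [std_cdf_zero] at h2
  linarith

lemma bddBelow_S {α : ℝ} (hα : 0 < α) :
    BddBelow {x : ℝ | α ≤ ((gaussianReal 0 1) (Iic x)).toReal} := by
  have hempty : ⋂ n : ℕ, Iic (-(n:ℝ)) = ∅ := by
    ext x
    simp only [mem_iInter, mem_Iic, mem_empty_iff_false, iff_false, not_forall, not_le]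
    obtain ⟨n, hn⟩ := exists_nat_gt (-x)
    exact ⟨n, by linarith⟩
  have htend : Filter.Tendsto (fun n : ℕ => (gaussianReal 0 1) (Iic (-(n:ℝ))))
      Filter.atTop (nhds 0) := by
    have h := tendsto_measure_iInter_atTop (μ := gaussianReal 0 1)
      (fun n => measurableSet_Iic.nullMeasurableSet)
      (fun i j hij => Iic_subset_Iic.2 (by exact_mod_cast neg_le_neg (Nat.cast_le.2 hij)))
      ⟨0, measure_ne_top _ _⟩
    rwa [hempty, measure_empty] at h
  have htoReal : Filter.Tendsto (fun n : ℕ => ((gaussianReal 0 1) (Iic (-(n:ℝ)))).toReal)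
      Filter.atTop (nhds 0) := by
    have := (ENNReal.tendsto_toReal ENNReal.zero_ne_top).comp htend
    exact this
  obtain ⟨n, hn⟩ := (htoReal.eventually (eventually_lt_nhds hα)).exists
  refine ⟨-(n:ℝ), fun y hy => ?_⟩
  by_contra hlt
  push_neg at hlt
  have := monotone_cdf (gaussianReal 0 1) hlt.le
  simp only [mem_setOf_eq] at hy
  exact absurd (le_trans hy this) (not_le.2 hn)

lemma qtl_affine {a b α : ℝ} (ha : 0 < a) (hα : 0 < α) (hα2 : α ≤ 1/2) :
    qtl ((gaussianReal 0 1).map (fun x => a * x + b)) α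
      = a * qtl (gaussianReal 0 1) α + b := by
  have hmeas : Measurable (fun x : ℝ => a * x + b) := by fun_prop
  have hne : {x : ℝ | α ≤ ((gaussianReal 0 1) (Iic x)).toReal}.Nonempty :=
    ⟨0, by rw [mem_setOf_eq, std_cdf_zero]; exact hα2⟩
  have hbdd := bddBelow_S hα
  have hset : {x : ℝ | α ≤ (((gaussianReal 0 1).map (fun x => a*x+b)) (Iic x)).toReal}
      = (fun y => a * y + b) '' {x : ℝ | α ≤ ((gaussianReal 0 1) (Iic x)).toReal} := by
    ext x
    rw [mem_setOf_eq, Measure.map_apply hmeas measurableSet_Iic]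
    have hpre : (fun x : ℝ => a*x+b) ⁻¹' (Iic x) = Iic ((x - b)/a) := by
      ext y
      simp only [mem_preimage, mem_Iic]
      rw [le_div_iff₀ ha]
      constructor <;> intro h <;> nlinarith
    rw [hpre]
    constructor
    · intro h
      exact ⟨(x-b)/a, h, by field_simp; ring⟩
    · rintro ⟨y, hy, rfl⟩
      have hyy : (a*y+b - b)/a = y := by field_simp; ring
      rwa [hyy]
  rw [qtl, hset, ← Monotone.map_csInf_of_continuousAt (by fun_prop)
    (fun u w huw => by nlinarith) hne hbdd]
  rfl

lemma qtl_dirac {m α : ℝ} (h0 : 0 < α) (h1 : α ≤ 1) : qtl (Measure.dirac m) α = m := by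
  have hS : {x : ℝ | α ≤ ((Measure.dirac m) (Iic x)).toReal} = Ici m := by
    ext x
    rw [mem_setOf_eq]
    rcases le_or_gt m x with hmx | hmx
    · have hd : (Measure.dirac m) (Iic x) = 1 := by
        rw [Measure.dirac_apply' _ measurableSet_Iic]; simp [hmx]
      rw [hd]
      simp only [ENNReal.toReal_one, mem_Ici]
      exact ⟨fun _ => hmx, fun _ => h1⟩
    · have hd : (Measure.dirac m) (Iic x) = 0 := by
        rw [Measure.dirac_apply' _ measurableSet_Iic]; simp [not_le.2 hmx]
      rw [hd]
      simp only [ENNReal.toReal_zero, mem_Ici]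
      constructor
      · intro h; linarith
      · intro h; linarith
  rw [qtl, hS, csInf_Ici]

lemma VaR_eq_qtl {Ω : Type*} [MeasurableSpace Ω] (P : Measure Ω) (X : Ω → ℝ)
    (hX : Measurable X) (α : ℝ) : VaR P X α = qtl (P.map X) α := by
  unfold VaR qtl
  congr 1
  ext x
  simp only [mem_setOf_eq]
  rw [Measure.map_apply hX measurableSet_Iic]
  rfl

lemma sqrt_sq_nnreal (v : ℝ≥0) : (⟨Real.sqrt v ^ 2, sq_nonneg _⟩ : ℝ≥0) * 1 = v := by
  rw [mul_one]
  ext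
  exact Real.sq_sqrt v.coe_nonneg

lemma map_std_affine {m : ℝ} {v : ℝ≥0} (hv : v ≠ 0) :
    gaussianReal m v = (gaussianReal 0 1).map (fun x => Real.sqrt v * x + m) := by
  have h1 : (gaussianReal 0 1).map (fun x : ℝ => Real.sqrt v * x)
      = gaussianReal 0 v := by
    rw [show (fun x : ℝ => Real.sqrt v * x) = ((Real.sqrt v : ℝ) * ·) from rfl,
      gaussianReal_map_const_mul, mul_zero]
    congr 1; ext; simp [Real.sq_sqrt v.coe_nonneg]
  have h2 : (fun x : ℝ => Real.sqrt v * x + m)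
      = (fun x : ℝ => x + m) ∘ (fun x : ℝ => Real.sqrt v * x) := rfl
  rw [h2, ← Measure.map_map (by fun_prop) (by fun_prop), h1]
  rw [show (fun x : ℝ => x + m) = (· + m) from rfl, gaussianReal_map_add_const, zero_add]

lemma VaR_gaussian {Ω : Type*} [MeasurableSpace Ω] (P : Measure Ω) (X : Ω → ℝ)
    (hX : Measurable X) {m : ℝ} {v : ℝ≥0} (hlaw : P.map X = gaussianReal m v)
    {α : ℝ} (hα : α ∈ Ioc (0:ℝ) (1/2)) :
    VaR P X α = m + Real.sqrt v * qtl (gaussianReal 0 1) α := by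
  rw [VaR_eq_qtl P X hX, hlaw]
  by_cases hv : v = 0
  · subst hv
    rw [gaussianReal_zero_var, qtl_dirac hα.1 (le_trans hα.2 (by norm_num))]
    simp
  · have hsq : (0:ℝ) < Real.sqrt v :=
      Real.sqrt_pos.2 (by exact_mod_cast pos_iff_ne_zero.2 hv)
    rw [map_std_affine hv, qtl_affine hsq hα.1 hα.2]
    ring

lemma qtl_std_nonpos {α : ℝ} (hα : α ∈ Ioc (0:ℝ) (1/2)) :
    qtl (gaussianReal 0 1) α ≤ 0 :=
  csInf_le (bddBelow_S hα.1) (by rw [mem_setOf_eq, std_cdf_zero]; exact hα.2)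

lemma qtl_std_quarter : qtl (gaussianReal 0 1) (1/4) ≤ -(1/2) :=
  csInf_le (bddBelow_S (by norm_num)) std_cdf_neg_half

lemma integral_gaussianReal {m : ℝ} {v : ℝ≥0} (hv : v ≠ 0) (g : ℝ → ℝ) :
    ∫ x, g x ∂(gaussianReal m v) = ∫ x, gaussianPDFReal m v x * g x := by
  rw [gaussianReal_of_var_ne_zero m hv, gaussianPDF_def]
  have hrw : (fun x => ENNReal.ofReal (gaussianPDFReal m v x))
      = fun x => ((Real.toNNReal (gaussianPDFReal m v x) : ℝ≥0) : ℝ≥0∞) := rfl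
  rw [hrw, integral_withDensity_eq_integral_smul
    (measurable_gaussianPDFReal m v).real_toNNReal g]
  congr 1
  ext x
  rw [NNReal.smul_def, smul_eq_mul, Real.coe_toNNReal _ (gaussianPDFReal_nonneg m v x)]

lemma integrable_gaussianReal {m : ℝ} {v : ℝ≥0} (hv : v ≠ 0) {g : ℝ → ℝ}
    (hg : Integrable (fun x => gaussianPDFReal m v x * g x)) :
    Integrable g (gaussianReal m v) := by
  rw [gaussianReal_of_var_ne_zero m hv, gaussianPDF_def]
  have hrw : (fun x => ENNReal.ofReal (gaussianPDFReal m v x))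
      = fun x => ((Real.toNNReal (gaussianPDFReal m v x) : ℝ≥0) : ℝ≥0∞) := rfl
  rw [hrw, integrable_withDensity_iff_integrable_coe_smul
    (measurable_gaussianPDFReal m v).real_toNNReal]
  refine hg.congr (Filter.Eventually.of_forall fun x => ?_)
  dsimp only
  rw [smul_eq_mul, Real.coe_toNNReal _ (gaussianPDFReal_nonneg m v x)]

lemma pdf_mul_eq {v : ℝ≥0} (hv : v ≠ 0) (g : ℝ → ℝ) :
    (fun x => gaussianPDFReal 0 v x * g x)
      = fun x => (Real.sqrt (2 * Real.pi * v))⁻¹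
          * (g x * Real.exp (-(2*(v:ℝ))⁻¹ * x ^ 2)) := by
  funext x
  have hvpos : (0:ℝ) < v := by exact_mod_cast pos_iff_ne_zero.2 hv
  rw [gaussianPDFReal]
  have : -(x - 0)^2 / (2 * (v:ℝ)) = -(2*(v:ℝ))⁻¹ * x ^ 2 := by
    field_simp; ring
  rw [this]
  ring

lemma integrable_id_gaussianReal {v : ℝ≥0} (hv : v ≠ 0) :
    Integrable (fun x : ℝ => x) (gaussianReal 0 v) := by
  have hvpos : (0:ℝ) < v := by exact_mod_cast pos_iff_ne_zero.2 hv
  refine integrable_gaussianReal hv ?_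
  rw [pdf_mul_eq hv]
  exact (integrable_mul_exp_neg_mul_sq (by positivity)).const_mul _

lemma integrable_sq_gaussianReal {v : ℝ≥0} (hv : v ≠ 0) :
    Integrable (fun x : ℝ => x ^ 2) (gaussianReal 0 v) := by
  have hvpos : (0:ℝ) < v := by exact_mod_cast pos_iff_ne_zero.2 hv
  refine integrable_gaussianReal hv ?_
  rw [pdf_mul_eq hv]
  refine Integrable.const_mul ?_ _
  have h := integrable_rpow_mul_exp_neg_mul_sq (b := (2*(v:ℝ))⁻¹) (by positivity)
    (s := 2) (by norm_num)
  refine h.congr (Filter.Eventually.of_forall fun x => ?_)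
  dsimp only
  rw [← Real.rpow_natCast x 2]
  norm_num

lemma integral_id_gaussianReal_zero {v : ℝ≥0} : ∫ x, x ∂(gaussianReal 0 v) = 0 := by
  by_cases hv : v = 0
  · subst hv; simp
  rw [integral_gaussianReal hv]
  have hodd : ∀ x : ℝ, gaussianPDFReal 0 v (-x) * (-x) = -(gaussianPDFReal 0 v x * x) := by
    intro x
    rw [gaussianPDFReal, gaussianPDFReal]
    ring_nf
  have h := integral_neg_eq_self (fun x => gaussianPDFReal 0 v x * x) (volume : Measure ℝ)
  simp only [hodd, integral_neg] at h
  linarith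

lemma integral_sq_exp_gaussian {b : ℝ} (hb : 0 < b) :
    ∫ x : ℝ, x ^ 2 * Real.exp (-b * x ^ 2)
      = b ^ (-(3:ℝ)/2) * (Real.sqrt Real.pi / 4) * 2 := by
  have habs : ∫ x : ℝ, x ^ 2 * Real.exp (-b * x ^ 2)
      = 2 * ∫ x in Ioi (0:ℝ), x ^ 2 * Real.exp (-b * x ^ 2) := by
    rw [← integral_comp_abs (f := fun x => x ^ 2 * Real.exp (-b * x ^ 2))]
    congr 1
    funext x
    rw [sq_abs]
  have hIoi : ∫ x in Ioi (0:ℝ), x ^ 2 * Real.exp (-b * x ^ 2)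
      = b ^ (-((2:ℝ)+1)/2) * (1/2) * Real.Gamma (((2:ℝ)+1)/2) := by
    rw [← integral_rpow_mul_exp_neg_mul_rpow (by norm_num : (0:ℝ) < 2)
      (by norm_num : (-1:ℝ) < 2) hb]
    refine setIntegral_congr_fun measurableSet_Ioi fun x hx => ?_
    rw [← Real.rpow_natCast x 2]
    norm_num
  have hGamma : Real.Gamma (((2:ℝ)+1)/2) = Real.sqrt Real.pi / 2 := by
    rw [show ((2:ℝ)+1)/2 = 1/2 + 1 by norm_num,
      Real.Gamma_add_one (by norm_num), Real.Gamma_one_half_eq]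
    ring
  rw [habs, hIoi, hGamma, show (-((2:ℝ)+1)/2) = -(3:ℝ)/2 by norm_num]
  ring

lemma integral_sq_gaussianReal_zero {v : ℝ≥0} : ∫ x, x ^ 2 ∂(gaussianReal 0 v) = v := by
  by_cases hv : v = 0
  · subst hv; simp
  have hvpos : (0:ℝ) < v := by exact_mod_cast pos_iff_ne_zero.2 hv
  rw [integral_gaussianReal hv]
  have : (fun x => gaussianPDFReal 0 v x * x ^ 2)
      = fun x => (Real.sqrt (2 * Real.pi * v))⁻¹
          * (x ^ 2 * Real.exp (-(2*(v:ℝ))⁻¹ * x ^ 2)) := pdf_mul_eq hv _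
  rw [this, integral_const_mul, integral_sq_exp_gaussian (by positivity)]
  have h1 : ((2*(v:ℝ))⁻¹) ^ (-(3:ℝ)/2) = (2*(v:ℝ)) ^ ((3:ℝ)/2) := by
    rw [Real.inv_rpow (by positivity), ← Real.rpow_neg (by positivity)]
    norm_num
  have h2 : (2*(v:ℝ)) ^ ((3:ℝ)/2) = (2*(v:ℝ)) * Real.sqrt (2*(v:ℝ)) := by
    rw [show (3:ℝ)/2 = 1 + 1/2 by norm_num, Real.rpow_add (by positivity),
      Real.rpow_one, Real.sqrt_eq_rpow]
  have h3 : Real.sqrt (2 * Real.pi * v) = Real.sqrt (2*(v:ℝ)) * Real.sqrt Real.pi := by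
    rw [← Real.sqrt_mul (by positivity)]
    ring_nf
  rw [h1, h2, h3]
  have hs1 : Real.sqrt (2*(v:ℝ)) ≠ 0 := by positivity
  have hs2 : Real.sqrt Real.pi ≠ 0 := by positivity
  field_simp
  ring

lemma integral_id_gaussianReal (m : ℝ) (v : ℝ≥0) : ∫ x, x ∂(gaussianReal m v) = m := by
  by_cases hv : v = 0
  · subst hv; simp
  have hmap : gaussianReal m v = (gaussianReal 0 v).map (· + m) := by
    rw [gaussianReal_map_add_const, zero_add]
  rw [hmap, integral_map (measurable_id'.add_const m).aemeasurable
    measurable_id'.aestronglyMeasurable]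
  rw [integral_add (integrable_id_gaussianReal hv) (integrable_const m)]
  rw [integral_id_gaussianReal_zero, integral_const]
  simp

lemma integral_sq_gaussianReal (m : ℝ) (v : ℝ≥0) :
    ∫ x, x ^ 2 ∂(gaussianReal m v) = v + m ^ 2 := by
  by_cases hv : v = 0
  · subst hv; simp
  have hmap : gaussianReal m v = (gaussianReal 0 v).map (· + m) := by
    rw [gaussianReal_map_add_const, zero_add]
  rw [hmap, integral_map (measurable_id'.add_const m).aemeasurable
    (measurable_id'.pow_const 2).aestronglyMeasurable]
  have hexp : (fun x : ℝ => (x + m) ^ 2)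
      = fun x : ℝ => x ^ 2 + (2*m * x + m ^ 2) := by funext x; ring
  have hintc : Integrable (fun x : ℝ => 2*m * x) (gaussianReal 0 v) :=
    (integrable_id_gaussianReal hv).const_mul (2*m)
  have hint2 : Integrable (fun x : ℝ => 2*m * x + m ^ 2) (gaussianReal 0 v) :=
    hintc.add (integrable_const (m^2))
  rw [hexp, integral_add (integrable_sq_gaussianReal hv) hint2,
    integral_add hintc (integrable_const _),
    integral_const_mul, integral_id_gaussianReal_zero, integral_sq_gaussianReal_zero,
    integral_const]
  simp

section Prob

variable {Ω : Type*} [MeasurableSpace Ω] {P : Measure Ω} [IsProbabilityMeasure P]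

lemma law_mean {X : Ω → ℝ} (hX : Measurable X) {m : ℝ} {v : ℝ≥0}
    (hlaw : P.map X = gaussianReal m v) : ∫ ω, X ω ∂P = m := by
  have h1 : ∫ x, x ∂(P.map X) = ∫ ω, X ω ∂P :=
    integral_map hX.aemeasurable measurable_id'.aestronglyMeasurable
  rw [← h1, hlaw, integral_id_gaussianReal]

lemma law_variance {X : Ω → ℝ} (hX : Measurable X) (hL2 : MemLp X 2 P) {m : ℝ} {v : ℝ≥0}
    (hlaw : P.map X = gaussianReal m v) : variance X P = v := by
  have h1 : ∫ x, x ^ 2 ∂(P.map X) = ∫ ω, X ω ^ 2 ∂P :=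
    integral_map hX.aemeasurable (measurable_id'.pow_const 2).aestronglyMeasurable
  have h2 : ∫ ω, X ω ^ 2 ∂P = (v : ℝ) + m ^ 2 := by
    rw [← h1, hlaw, integral_sq_gaussianReal]
  rw [variance_eq_sub hL2]
  have h3 : ∫ ω, (X ^ 2) ω ∂P = ∫ ω, X ω ^ 2 ∂P := rfl
  rw [h3, h2, law_mean hX hlaw]
  ring

lemma integrable_mul_of_memℒp {X Y : Ω → ℝ} (hX : MemLp X 2 P) (hY : MemLp Y 2 P) :
    Integrable (fun ω => X ω * Y ω) P := by
  refine Integrable.mono' ((hX.integrable_sq.add hY.integrable_sq).div_const 2)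
    (hX.aestronglyMeasurable.mul hY.aestronglyMeasurable)
    (Filter.Eventually.of_forall fun ω => ?_)
  simp only [Pi.add_apply]
  rw [Real.norm_eq_abs, abs_mul]
  nlinarith [sq_nonneg (|X ω| - |Y ω|), sq_abs (X ω), sq_abs (Y ω),
    abs_nonneg (X ω), abs_nonneg (Y ω)]

lemma cov_eq {X Y : Ω → ℝ} (hX : MemLp X 2 P) (hY : MemLp Y 2 P) :
    cov P X Y = (∫ ω, X ω * Y ω ∂P) - (∫ ω, X ω ∂P) * (∫ ω, Y ω ∂P) := by
  set mX := ∫ ω, X ω ∂P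
  set mY := ∫ ω, Y ω ∂P
  have hXi : Integrable X P := hX.integrable one_le_two
  have hYi : Integrable Y P := hY.integrable one_le_two
  have hXY : Integrable (fun ω => X ω * Y ω) P := integrable_mul_of_memℒp hX hY
  have hexp : (fun ω => (X ω - mX) * (Y ω - mY))
      = fun ω => X ω * Y ω - (mY * X ω + (mX * Y ω - mX * mY)) := by
    funext ω; ring
  have hA : Integrable (fun ω => mY * X ω) P := hXi.const_mul mY
  have hC : Integrable (fun ω => mX * Y ω) P := hYi.const_mul mX
  have hB : Integrable (fun ω => mX * Y ω - mX * mY) P := hC.sub (integrable_const _)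
  have hrest : Integrable (fun ω => mY * X ω + (mX * Y ω - mX * mY)) P := hA.add hB
  rw [cov, hexp, integral_sub hXY hrest, integral_add hA hB,
    integral_sub hC (integrable_const _),
    integral_const_mul, integral_const_mul, integral_const]
  simp only [measure_univ, probReal_univ, ENNReal.toReal_one, one_smul, smul_eq_mul]
  ring

lemma variance_add_cov {X Y : Ω → ℝ} (hX : MemLp X 2 P) (hY : MemLp Y 2 P) :
    variance (fun ω => X ω + Y ω) P = variance X P + variance Y P + 2 * cov P X Y := by
  have hXi : Integrable X P := hX.integrable one_le_two
  have hYi : Integrable Y P := hY.integrable one_le_two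
  have hXY : Integrable (fun ω => X ω * Y ω) P := integrable_mul_of_memℒp hX hY
  have hZ : MemLp (fun ω => X ω + Y ω) 2 P := hX.add hY
  rw [variance_eq_sub hZ, variance_eq_sub hX, variance_eq_sub hY, cov_eq hX hY]
  have e1 : ∫ ω, ((fun ω => X ω + Y ω) ^ 2) ω ∂P
      = ∫ ω, (X ω ^ 2 + (2 * (X ω * Y ω) + Y ω ^ 2)) ∂P := by
    congr 1; funext ω; simp [Pi.pow_apply]; ring
  have e2 : ∫ ω, (fun ω => X ω + Y ω) ω ∂P = (∫ ω, X ω ∂P) + ∫ ω, Y ω ∂P := by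
    simp only
    exact integral_add hXi hYi
  have hc2 : Integrable (fun ω => 2 * (X ω * Y ω)) P := hXY.const_mul 2
  have hsq2 : Integrable (fun ω => Y ω ^ 2) P := hY.integrable_sq
  have hc3 : Integrable (fun ω => 2 * (X ω * Y ω) + Y ω ^ 2) P := hc2.add hsq2
  rw [e1, e2, integral_add hX.integrable_sq hc3, integral_add hc2 hsq2, integral_const_mul]
  have h3 : ∀ Z : Ω → ℝ, ∫ ω, (Z ^ 2) ω ∂P = ∫ ω, Z ω ^ 2 ∂P := fun Z => rfl
  rw [h3 X, h3 Y]
  ring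

lemma cov_le_sqrt_var {X Y : Ω → ℝ} (hX : MemLp X 2 P) (hY : MemLp Y 2 P) :
    cov P X Y ≤ Real.sqrt (variance X P) * Real.sqrt (variance Y P) := by
  set f := fun ω => X ω - ∫ ω', X ω' ∂P with hf_def
  set g := fun ω => Y ω - ∫ ω', Y ω' ∂P with hg_def
  have hf : MemLp f 2 P := hX.sub (memLp_const _)
  have hg : MemLp g 2 P := hY.sub (memLp_const _)
  have hvarX : variance X P = ∫ ω, f ω ^ 2 ∂P := by
    exact variance_eq_integral hX.aemeasurable
  have hvarY : variance Y P = ∫ ω, g ω ^ 2 ∂P := by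
    exact variance_eq_integral hY.aemeasurable
  have hconj : (2:ℝ).HolderConjugate 2 := Real.holderConjugate_iff.2 ⟨one_lt_two, by norm_num⟩
  have h2 : ENNReal.ofReal (2:ℝ) = 2 := by
    rw [ENNReal.ofReal_ofNat]
  have habs : ∫ ω, f ω * g ω ∂P ≤ ∫ ω, |f ω| * |g ω| ∂P := by
    refine integral_mono (integrable_mul_of_memℒp hf hg) ?_ fun ω => ?_
    · have := integrable_mul_of_memℒp hf.abs hg.abs
      exact this
    · rw [← abs_mul]
      exact le_abs_self _
  have hH : ∫ ω, |f ω| * |g ω| ∂P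
      ≤ (∫ ω, |f ω| ^ (2:ℝ) ∂P) ^ ((1:ℝ)/2) * (∫ ω, |g ω| ^ (2:ℝ) ∂P) ^ ((1:ℝ)/2) := by
    refine integral_mul_le_Lp_mul_Lq_of_nonneg hconj
      (Filter.Eventually.of_forall fun ω => abs_nonneg _)
      (Filter.Eventually.of_forall fun ω => abs_nonneg _) ?_ ?_
    · rw [h2]; exact hf.abs
    · rw [h2]; exact hg.abs
  have hrw : ∀ h : Ω → ℝ, (fun ω => |h ω| ^ (2:ℝ)) = fun ω => h ω ^ 2 := by
    intro h; funext ω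
    rw [show ((2:ℝ)) = ((2:ℕ):ℝ) by norm_num, Real.rpow_natCast, sq_abs]
  rw [hrw f, hrw g] at hH
  have hcov : cov P X Y = ∫ ω, f ω * g ω ∂P := rfl
  have hfr : (∫ ω, f ω ^ 2 ∂P) ^ ((1:ℝ)/2) = Real.sqrt (variance X P) := by
    rw [hvarX, Real.sqrt_eq_rpow]
  have hgr : (∫ ω, g ω ^ 2 ∂P) ^ ((1:ℝ)/2) = Real.sqrt (variance Y P) := by
    rw [hvarY, Real.sqrt_eq_rpow]
  rw [hcov, ← hfr, ← hgr]
  exact le_trans habs hH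

end Prob

end VaRAux

end VaRAuxSection

open VaRAux

theorem bivariate_gaussian_VaR_subadditive_lower_tail {Ω : Type*} [MeasurableSpace Ω]
    (P : Measure Ω) [IsProbabilityMeasure P]
    (X₁ X₂ : Ω → ℝ) (hX₁ : Measurable X₁) (hX₂ : Measurable X₂)
    (hL2₁ : MemLp X₁ 2 P) (hL2₂ : MemLp X₂ 2 P)
    (hgauss : ∀ a b : ℝ, ∃ (m : ℝ) (v : ℝ≥0),
      P.map (fun ω => a * X₁ ω + b * X₂ ω) = gaussianReal m v)
    (hsub : ∀ α ∈ Set.Ioc (0 : ℝ) (1 / 2),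
      VaR P (fun ω => X₁ ω + X₂ ω) α ≤ VaR P X₁ α + VaR P X₂ α) :
    (∀ α ∈ Set.Ioc (0 : ℝ) (1 / 2),
      VaR P (fun ω => X₁ ω + X₂ ω) α = VaR P X₁ α + VaR P X₂ α) ∧
    stddev P X₁ * stddev P X₂ * (1 - cov P X₁ X₂ / (stddev P X₁ * stddev P X₂)) = 0 := by
  have hrw₁ : (fun ω => (1:ℝ) * X₁ ω + (0:ℝ) * X₂ ω) = X₁ := by funext ω; ring
  have hrw₂ : (fun ω => (0:ℝ) * X₁ ω + (1:ℝ) * X₂ ω) = X₂ := by funext ω; ring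
  have hrwₛ : (fun ω => (1:ℝ) * X₁ ω + (1:ℝ) * X₂ ω) = fun ω => X₁ ω + X₂ ω := by
    funext ω; ring
  obtain ⟨m₁, v₁, hlaw₁⟩ := hgauss 1 0
  obtain ⟨m₂, v₂, hlaw₂⟩ := hgauss 0 1
  obtain ⟨ms, vs, hlaws⟩ := hgauss 1 1
  rw [hrw₁] at hlaw₁
  rw [hrw₂] at hlaw₂
  rw [hrwₛ] at hlaws
  have hXs : Measurable (fun ω => X₁ ω + X₂ ω) := hX₁.add hX₂
  have hL2s : MemLp (fun ω => X₁ ω + X₂ ω) 2 P := hL2₁.add hL2₂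
  have hI₁ : Integrable X₁ P := hL2₁.integrable one_le_two
  have hI₂ : Integrable X₂ P := hL2₂.integrable one_le_two
  -- moments
  have hm₁ : ∫ ω, X₁ ω ∂P = m₁ := law_mean hX₁ hlaw₁
  have hm₂ : ∫ ω, X₂ ω ∂P = m₂ := law_mean hX₂ hlaw₂
  have hms : ms = m₁ + m₂ := by
    have := law_mean hXs hlaws
    rw [integral_add hI₁ hI₂, hm₁, hm₂] at this
    exact this.symm
  have hv₁ : variance X₁ P = v₁ := law_variance hX₁ hL2₁ hlaw₁
  have hv₂ : variance X₂ P = v₂ := law_variance hX₂ hL2₂ hlaw₂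
  have hvs : variance (fun ω => X₁ ω + X₂ ω) P = vs := law_variance hXs hL2s hlaws
  have hvadd : (vs:ℝ) = (v₁:ℝ) + (v₂:ℝ) + 2 * cov P X₁ X₂ := by
    rw [← hv₁, ← hv₂, ← hvs]
    exact variance_add_cov hL2₁ hL2₂
  have hCS : cov P X₁ X₂ ≤ Real.sqrt v₁ * Real.sqrt v₂ := by
    have := cov_le_sqrt_var hL2₁ hL2₂
    rwa [hv₁, hv₂] at this
  -- VaR formulas
  have hVaR₁ : ∀ α ∈ Set.Ioc (0:ℝ) (1/2),
      VaR P X₁ α = m₁ + Real.sqrt v₁ * qtl (gaussianReal 0 1) α :=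
    fun α hα => VaR_gaussian P X₁ hX₁ hlaw₁ hα
  have hVaR₂ : ∀ α ∈ Set.Ioc (0:ℝ) (1/2),
      VaR P X₂ α = m₂ + Real.sqrt v₂ * qtl (gaussianReal 0 1) α :=
    fun α hα => VaR_gaussian P X₂ hX₂ hlaw₂ hα
  have hVaRs : ∀ α ∈ Set.Ioc (0:ℝ) (1/2),
      VaR P (fun ω => X₁ ω + X₂ ω) α = ms + Real.sqrt vs * qtl (gaussianReal 0 1) α :=
    fun α hα => VaR_gaussian P _ hXs hlaws hα
  -- √vs ≤ √v₁ + √v₂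
  have hsum_nonneg : (0:ℝ) ≤ Real.sqrt v₁ + Real.sqrt v₂ := by positivity
  have hle : Real.sqrt vs ≤ Real.sqrt v₁ + Real.sqrt v₂ := by
    have hvs_le : (vs:ℝ) ≤ (Real.sqrt v₁ + Real.sqrt v₂) ^ 2 := by
      have e1 : Real.sqrt v₁ ^ 2 = (v₁:ℝ) := Real.sq_sqrt v₁.coe_nonneg
      have e2 : Real.sqrt v₂ ^ 2 = (v₂:ℝ) := Real.sq_sqrt v₂.coe_nonneg
      nlinarith [hvadd, hCS]
    calc Real.sqrt vs ≤ Real.sqrt ((Real.sqrt v₁ + Real.sqrt v₂) ^ 2) :=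
          Real.sqrt_le_sqrt hvs_le
      _ = Real.sqrt v₁ + Real.sqrt v₂ := Real.sqrt_sq hsum_nonneg
  -- √vs ≥ √v₁ + √v₂ from hsub at 1/4
  have hmem : (1/4 : ℝ) ∈ Set.Ioc (0:ℝ) (1/2) := by constructor <;> norm_num
  have hge : Real.sqrt v₁ + Real.sqrt v₂ ≤ Real.sqrt vs := by
    have h4 := hsub (1/4) hmem
    rw [hVaR₁ (1/4) hmem, hVaR₂ (1/4) hmem, hVaRs (1/4) hmem, hms] at h4
    have hq := qtl_std_quarter
    nlinarith [h4, hq]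
  have heq : Real.sqrt vs = Real.sqrt v₁ + Real.sqrt v₂ := le_antisymm hle hge
  have hcov : cov P X₁ X₂ = Real.sqrt v₁ * Real.sqrt v₂ := by
    have hsq : (vs:ℝ) = (Real.sqrt v₁ + Real.sqrt v₂) ^ 2 := by
      rw [← heq, Real.sq_sqrt vs.coe_nonneg]
    have e1 : Real.sqrt v₁ ^ 2 = (v₁:ℝ) := Real.sq_sqrt v₁.coe_nonneg
    have e2 : Real.sqrt v₂ ^ 2 = (v₂:ℝ) := Real.sq_sqrt v₂.coe_nonneg
    nlinarith [hvadd, hsq]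
  have hσ₁ : stddev P X₁ = Real.sqrt v₁ := by rw [stddev, hv₁]
  have hσ₂ : stddev P X₂ = Real.sqrt v₂ := by rw [stddev, hv₂]
  constructor
  · intro α hα
    rw [hVaRs α hα, hVaR₁ α hα, hVaR₂ α hα, hms, heq]
    ring
  · rw [hσ₁, hσ₂, hcov]
    by_cases h : Real.sqrt v₁ * Real.sqrt v₂ = 0
    · rw [h]; ring
    · rw [div_self h]; ring
end

section
/- Let X₁, …, Xₙ be random variables and U uniform on (0,1). Then the sum F_{X₁}^{-1}(U) + ⋯ + F_{Xₙ}^{-1}(U) equals F_T^{-1}(U) almost surely, where T = F_{X₁}^{-1}(U) + ⋯ + F_{Xₙ}^{-1}(U); in particular, for a comonotonic vector, VaR is additive: F_T^{-1}(α) = ∑ᵢ F_{Xᵢ}^{-1}(α) for almost every α ∈ (0,1). -/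
open MeasureTheory ProbabilityTheory
open scoped NNReal

open Set Filter
open scoped Topology

section auxlemmas
variable {Ω : Type*} [MeasurableSpace Ω] (P : Measure Ω) [IsProbabilityMeasure P]

lemma VaR_set_eq' {Y : Ω → ℝ} (hY : Measurable Y) (x : ℝ) :
    (P {ω | Y ω ≤ x}).toReal = cdf (P.map Y) x := by
  have : IsProbabilityMeasure (P.map Y) := Measure.isProbabilityMeasure_map hY.aemeasurable
  rw [cdf_eq_real, measureReal_def, Measure.map_apply hY measurableSet_Iic]
  rfl

lemma VaR_bddBelow' {Y : Ω → ℝ} (hY : Measurable Y) {α : ℝ} (hα : 0 < α) :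
    BddBelow {x : ℝ | α ≤ (P {ω | Y ω ≤ x}).toReal} := by
  have : IsProbabilityMeasure (P.map Y) := Measure.isProbabilityMeasure_map hY.aemeasurable
  have h := (tendsto_cdf_atBot (P.map Y)).eventually (eventually_lt_nhds hα)
  obtain ⟨x0, hx0⟩ := h.exists
  refine ⟨x0, fun x hx => ?_⟩
  by_contra hlt
  push_neg at hlt
  rw [Set.mem_setOf_eq, VaR_set_eq' P hY] at hx
  exact absurd (hx.trans (monotone_cdf _ hlt.le)) (not_le.2 hx0)

lemma VaR_nonempty' {Y : Ω → ℝ} (hY : Measurable Y) {α : ℝ} (hα : α < 1) :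
    Set.Nonempty {x : ℝ | α ≤ (P {ω | Y ω ≤ x}).toReal} := by
  have : IsProbabilityMeasure (P.map Y) := Measure.isProbabilityMeasure_map hY.aemeasurable
  have h := (tendsto_cdf_atTop (P.map Y)).eventually (eventually_gt_nhds hα)
  obtain ⟨x1, hx1⟩ := h.exists
  exact ⟨x1, by rw [Set.mem_setOf_eq, VaR_set_eq' P hY]; exact hx1.le⟩

lemma VaR_monotoneOn' {Y : Ω → ℝ} (hY : Measurable Y) :
    MonotoneOn (VaR P Y) (Set.Ioo 0 1) := by
  intro a ha b hb hab
  exact csInf_le_csInf (VaR_bddBelow' P hY ha.1) (VaR_nonempty' P hY hb.2)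
    (fun x hx => le_trans hab hx)

omit [IsProbabilityMeasure P] in
lemma comp_measure_eq' {g : ℝ → ℝ} (hg : MonotoneOn g (Set.Ioo 0 1))
    {U : Ω → ℝ} (hU : Measurable U) (hUuni : P.map U = volume.restrict (Set.Ioo (0:ℝ) 1))
    (x : ℝ) :
    P {ω | g (U ω) ≤ x} = volume ({u | g u ≤ x} ∩ Set.Ioo 0 1) := by
  set s : Set ℝ := {u | g u ≤ x} with hs
  have hms : MeasurableSet (s ∩ Set.Ioo 0 1) := by
    apply Set.OrdConnected.measurableSet
    constructor
    rintro a ⟨ha, ha'⟩ b ⟨hb, hb'⟩ c hc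
    have hcI : c ∈ Set.Ioo (0:ℝ) 1 := ⟨lt_of_lt_of_le ha'.1 hc.1, lt_of_le_of_lt hc.2 hb'.2⟩
    exact ⟨le_trans (hg hcI hb' hc.2) hb, hcI⟩
  have hae : s =ᵐ[volume.restrict (Set.Ioo (0:ℝ) 1)] ((s ∩ Set.Ioo 0 1 : Set ℝ)) := by
    rw [Filter.eventuallyEq_set]
    filter_upwards [ae_restrict_mem measurableSet_Ioo] with u hu
    simp [hu]
  have hnull : NullMeasurableSet s (P.map U) := by
    rw [hUuni]
    exact hms.nullMeasurableSet.congr hae.symm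
  have h1 : P {ω | g (U ω) ≤ x} = (P.map U) s := by
    rw [Measure.map_apply₀ hU.aemeasurable hnull]
    rfl
  rw [h1, hUuni, measure_congr hae, Measure.restrict_apply hms,
    Set.inter_assoc, Set.inter_self]

omit [IsProbabilityMeasure P] in
lemma key_comp' {g : ℝ → ℝ} (hg : MonotoneOn g (Set.Ioo 0 1))
    {U : Ω → ℝ} (hU : Measurable U) (hUuni : P.map U = volume.restrict (Set.Ioo (0:ℝ) 1))
    {α : ℝ} (hα : α ∈ Set.Ioo (0:ℝ) 1) (hc : ContinuousWithinAt g (Set.Iio α) α) :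
    VaR P (fun ω => g (U ω)) α = g α := by
  have hfin : ∀ x : ℝ, volume ({u | g u ≤ x} ∩ Set.Ioo 0 1) ≠ ⊤ := by
    intro x
    exact ne_top_of_le_ne_top (by simp) (measure_mono Set.inter_subset_right)
  have hmem : g α ∈ {x : ℝ | α ≤ (P {ω | g (U ω) ≤ x}).toReal} := by
    rw [Set.mem_setOf_eq, comp_measure_eq' P hg hU hUuni]
    have hsub : Set.Ioo (0:ℝ) α ⊆ {u | g u ≤ g α} ∩ Set.Ioo 0 1 := by
      intro u hu
      have huI : u ∈ Set.Ioo (0:ℝ) 1 := ⟨hu.1, hu.2.trans hα.2⟩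
      exact ⟨hg huI hα hu.2.le, huI⟩
    have hle : ENNReal.ofReal α ≤ volume ({u | g u ≤ g α} ∩ Set.Ioo 0 1) := by
      calc ENNReal.ofReal α = volume (Set.Ioo (0:ℝ) α) := by rw [Real.volume_Ioo, sub_zero]
        _ ≤ _ := measure_mono hsub
    calc α = (ENNReal.ofReal α).toReal := (ENNReal.toReal_ofReal hα.1.le).symm
      _ ≤ _ := ENNReal.toReal_mono (hfin _) hle
  have hlb : ∀ x ∈ {x : ℝ | α ≤ (P {ω | g (U ω) ≤ x}).toReal}, g α ≤ x := by
    intro x hx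
    by_contra hxg
    push_neg at hxg
    have hev1 : ∀ᶠ β in 𝓝[<] α, x < g β := hc.eventually (eventually_gt_nhds hxg)
    have hev2 : Set.Ioo (0:ℝ) α ∈ 𝓝[<] α := Ioo_mem_nhdsLT_of_mem ⟨hα.1, le_refl α⟩
    obtain ⟨β, hβ1, hβ2⟩ := (hev1.and (eventually_of_mem hev2 (fun b hb => hb))).exists
    have hβI : β ∈ Set.Ioo (0:ℝ) 1 := ⟨hβ2.1, hβ2.2.trans hα.2⟩
    rw [Set.mem_setOf_eq, comp_measure_eq' P hg hU hUuni] at hx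
    have hsub : {u | g u ≤ x} ∩ Set.Ioo 0 1 ⊆ Set.Ioo (0:ℝ) β := by
      rintro u ⟨hu, huI⟩
      refine ⟨huI.1, ?_⟩
      by_contra hub
      push_neg at hub
      exact absurd (le_trans (hg hβI huI hub) hu) (not_le.2 hβ1)
    have hβle : (volume ({u | g u ≤ x} ∩ Set.Ioo 0 1)).toReal ≤ β := by
      calc (volume ({u | g u ≤ x} ∩ Set.Ioo 0 1)).toReal
          ≤ (volume (Set.Ioo (0:ℝ) β)).toReal :=
            ENNReal.toReal_mono (by simp) (measure_mono hsub)
        _ = β := by rw [Real.volume_Ioo, sub_zero, ENNReal.toReal_ofReal hβ2.1.le]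
    linarith [hx.trans hβle, hβ2.2]
  exact le_antisymm (csInf_le ⟨g α, fun x hx => hlb x hx⟩ hmem) (le_csInf ⟨g α, hmem⟩ hlb)

lemma countable_bad' {g : ℝ → ℝ} (hg : MonotoneOn g (Set.Ioo 0 1)) :
    Set.Countable {α | α ∈ Set.Ioo (0:ℝ) 1 ∧ ¬ ContinuousWithinAt g (Set.Iio α) α} := by
  have key : ∀ n : ℕ, Set.Countable {α | α ∈ Set.Ioc (1/(n+2) : ℝ) (1 - 1/(n+2)) ∧
      ¬ ContinuousWithinAt g (Set.Iio α) α} := by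
    intro n
    have ha0 : (0:ℝ) < 1/(n+2) := by positivity
    have ha2 : (1/(n+2) : ℝ) ≤ 1/2 := by
      apply one_div_le_one_div_of_le
      · norm_num
      · have : (0:ℝ) ≤ n := Nat.cast_nonneg n
        linarith
    have hab : (1/(n+2) : ℝ) ≤ 1 - 1/(n+2) := by linarith
    set a : ℝ := 1/(n+2) with hadef
    have hclamp : ∀ t : ℝ, min (max t a) (1-a) ∈ Set.Ioo (0:ℝ) 1 := by
      intro t
      constructor
      · exact lt_min (lt_of_lt_of_le ha0 (le_max_right _ _)) (lt_of_lt_of_le ha0 hab)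
      · exact lt_of_le_of_lt (min_le_right _ _) (by linarith)
    have hGmono : Monotone (fun t : ℝ => g (min (max t a) (1-a))) := by
      intro t s hts
      exact hg (hclamp t) (hclamp s) (min_le_min (max_le_max hts (le_refl a)) (le_refl _))
    apply (hGmono.monotoneOn Set.univ).countable_not_continuousWithinAt_Iio.mono
    rintro α ⟨hαI, hαc⟩
    refine ⟨Set.mem_univ _, ?_⟩
    rw [Set.univ_inter]
    intro hCG
    apply hαc
    have hev : Set.Ioo a α ∈ 𝓝[<] α := Ioo_mem_nhdsLT_of_mem ⟨hαI.1, le_refl α⟩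
    refine hCG.congr_of_eventuallyEq ?_ ?_
    · filter_upwards [hev] with β hβ
      have h1 : max β a = β := max_eq_left hβ.1.le
      have h2 : min β (1-a) = β := min_eq_left (hβ.2.le.trans hαI.2)
      simp only [h1, h2]
    · have h1 : max α a = α := max_eq_left hαI.1.le
      have h2 : min α (1-a) = α := min_eq_left hαI.2
      simp only [h1, h2]
  apply Set.Countable.mono _ (Set.countable_iUnion key)
  rintro α ⟨hαI, hαc⟩
  have hpos : (0:ℝ) < min α (1-α) := lt_min hαI.1 (by linarith [hαI.2])
  obtain ⟨n, hn⟩ := exists_nat_one_div_lt hpos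
  refine Set.mem_iUnion.2 ⟨n, ⟨?_, hαc⟩⟩
  have hmono : (1/(n+2) : ℝ) ≤ 1/(n+1) := by
    apply one_div_le_one_div_of_le
    · positivity
    · linarith
  have h1 : (1/(n+2) : ℝ) < α := lt_of_le_of_lt hmono (hn.trans_le (min_le_left _ _))
  have h2 : (1/(n+2) : ℝ) < 1 - α := lt_of_le_of_lt hmono (hn.trans_le (min_le_right _ _))
  exact ⟨h1, by linarith⟩

end auxlemmas

theorem quantile_sum_composition {Ω : Type*} [MeasurableSpace Ω]
    (P : Measure Ω) [IsProbabilityMeasure P]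
    {n : ℕ} (X : Fin n → Ω → ℝ) (hX : ∀ i, Measurable (X i))
    (U : Ω → ℝ) (hU : Measurable U) (hUuni : UniformOn01 P U) :
    (∀ᵐ ω ∂P, (∑ i, VaR P (X i) (U ω)) =
      VaR P (fun ω' => ∑ i, VaR P (X i) (U ω')) (U ω)) ∧
    (∀ᵐ α ∂(volume.restrict (Set.Ioo (0 : ℝ) 1)),
      VaR P (fun ω' => ∑ i, VaR P (X i) (U ω')) α = ∑ i, VaR P (X i) α) := by
  set g : ℝ → ℝ := fun α => ∑ i, VaR P (X i) α with hgdef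
  have hgmono : MonotoneOn g (Set.Ioo 0 1) := by
    intro a ha b hb hab
    exact Finset.sum_le_sum (fun i _ => VaR_monotoneOn' P (hX i) ha hb hab)
  have hDc : Set.Countable {α | α ∈ Set.Ioo (0:ℝ) 1 ∧ ¬ ContinuousWithinAt g (Set.Iio α) α} :=
    countable_bad' hgmono
  set D : Set ℝ := {α | α ∈ Set.Ioo (0:ℝ) 1 ∧ ¬ ContinuousWithinAt g (Set.Iio α) α} with hDdef
  set N : Set ℝ := D ∪ (Set.Ioo (0:ℝ) 1)ᶜ with hNdef
  have hNm : MeasurableSet N := (hDc.measurableSet).union measurableSet_Ioo.compl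
  have hN0 : volume.restrict (Set.Ioo (0:ℝ) 1) N = 0 := by
    apply measure_union_null
    · exact le_antisymm (le_trans (Measure.restrict_le_self _) (hDc.measure_zero volume).le) (zero_le)
    · rw [Measure.restrict_apply measurableSet_Ioo.compl, Set.compl_inter_self]
      exact measure_empty
  have hgood : ∀ α, α ∉ N → VaR P (fun ω' => g (U ω')) α = g α := by
    intro α hα
    rw [hNdef, Set.mem_union, not_or, Set.notMem_compl_iff] at hα
    have hαI : α ∈ Set.Ioo (0:ℝ) 1 := hα.2
    have hαc : ContinuousWithinAt g (Set.Iio α) α := by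
      by_contra hc
      exact hα.1 ⟨hαI, hc⟩
    exact key_comp' P hgmono hU hUuni hαI hαc
  constructor
  · rw [Filter.eventually_iff, mem_ae_iff]
    have hP : P (U ⁻¹' N) = 0 := by rw [← Measure.map_apply hU hNm, hUuni, hN0]
    apply measure_mono_null _ hP
    intro ω hω
    simp only [Set.mem_compl_iff, Set.mem_setOf_eq] at hω
    by_contra hωN
    exact hω ((hgood (U ω) hωN).symm)
  · rw [Filter.eventually_iff, mem_ae_iff]
    apply measure_mono_null _ hN0
    intro α hα
    simp only [Set.mem_compl_iff, Set.mem_setOf_eq] at hα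
    by_contra hαN
    exact hα (hgood α hαN)
end
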